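/- arXiv:1303.3157 — 10 statements merged into one kernel-verified Lean document; each statement's English description precedes it below -/
import Mathlib

section
/- Let G be a group, M a commutative monoid (written additively), and φ a filter on G. Then for all s, t ∈ M one has [φ_s⁺, φ_t] ≤ φ_{s+t}⁺ and [φ_s, φ_t⁺] ≤ φ_{s+t}⁺. -/
/-- `φ_s⁺`, the subgroup generated by all `φ (s + t)` with `t ≠ 0`. -/
def filterPlus {M : Type*} [AddCommMonoid M] {G : Type*} [Group G]
    (φ : M → Subgroup G) (s : M) : Subgroup G :=
  ⨆ t ∈ {t : M | t ≠ 0}, φ (s + t)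

/-- A filter on `G` over the commutative monoid `M`. -/
def IsFilter {M : Type*} [AddCommMonoid M] {G : Type*} [Group G]
    (φ : M → Subgroup G) : Prop :=
  φ 0 = ⊤ ∧ ∀ s t : M, ⁅φ s, φ t⁆ ≤ φ (s + t) ∧ φ (s + t) ≤ φ s ⊓ φ t

/-!
Every `φ m` is normal, since `[G, φ m] = [φ 0, φ m] ≤ φ m`; hence so is `φ_s⁺`. Modulo a normal
subgroup `N`, the condition `[H, K] ≤ N` says that `H` maps into the centralizer of the image of `K`,
which is a subgroup; so it passes from the generators `φ (s + u)` of `φ_s⁺` to `φ_s⁺` itself, and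
`[φ (s + u), φ t] ≤ φ (s + t + u) ≤ φ_{s+t}⁺`. The second inclusion is the first one with the
arguments of the commutator swapped.
-/

namespace Subgroup

variable {G : Type*} [Group G]

theorem commutator_le_iff_le_comap_centralizer {H K N : Subgroup G} [N.Normal] :
    ⁅H, K⁆ ≤ N ↔
      H ≤ (centralizer (K.map (QuotientGroup.mk' N) : Set (G ⧸ N))).comap (QuotientGroup.mk' N) := by
  rw [← map_le_iff_le_comap, ← commutator_eq_bot_iff_le_centralizer, ← map_commutator,
    map_eq_bot_iff, QuotientGroup.ker_mk']

theorem biSup_commutator_le {ι : Type*} {S : Set ι} {H : ι → Subgroup G} {K N : Subgroup G}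
    [N.Normal] (h : ∀ i ∈ S, ⁅H i, K⁆ ≤ N) : ⁅⨆ i ∈ S, H i, K⁆ ≤ N := by
  simp only [commutator_le_iff_le_comap_centralizer] at h ⊢
  exact iSup₂_le h

end Subgroup

section

variable {M : Type*} [AddCommMonoid M] {G : Type*} [Group G] {φ : M → Subgroup G}

theorem le_filterPlus (s : M) {u : M} (hu : u ≠ 0) : φ (s + u) ≤ filterPlus φ s :=
  le_biSup (fun t => φ (s + t)) hu

namespace IsFilter

theorem normal (hφ : IsFilter φ) (m : M) : (φ m).Normal := by
  rw [← Subgroup.commutator_top_left_le_iff, ← hφ.1]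
  simpa only [zero_add] using (hφ.2 0 m).1

theorem filterPlus_normal (hφ : IsFilter φ) (s : M) : (filterPlus φ s).Normal :=
  Subgroup.biSup_normal _ _ fun u _ => hφ.normal (s + u)

theorem commutator_filterPlus_left_le (hφ : IsFilter φ) (s t : M) :
    ⁅filterPlus φ s, φ t⁆ ≤ filterPlus φ (s + t) := by
  have := hφ.filterPlus_normal (s + t)
  refine Subgroup.biSup_commutator_le fun u (hu : u ≠ 0) => ?_
  calc ⁅φ (s + u), φ t⁆ ≤ φ (s + u + t) := (hφ.2 (s + u) t).1
    _ = φ (s + t + u) := by rw [add_right_comm]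
    _ ≤ filterPlus φ (s + t) := le_filterPlus (s + t) hu

theorem commutator_filterPlus_right_le (hφ : IsFilter φ) (s t : M) :
    ⁅φ s, filterPlus φ t⁆ ≤ filterPlus φ (s + t) := by
  rw [Subgroup.commutator_comm, add_comm]
  exact hφ.commutator_filterPlus_left_le t s

end IsFilter

end

theorem statement0 {G : Type*} [Group G] {M : Type*} [AddCommMonoid M]
    (φ : M → Subgroup G) (hφ : IsFilter φ) (s t : M) :
    ⁅filterPlus φ s, φ t⁆ ≤ filterPlus φ (s + t) ∧
      ⁅φ s, filterPlus φ t⁆ ≤ filterPlus φ (s + t) :=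
  ⟨hφ.commutator_filterPlus_left_le s t, hφ.commutator_filterPlus_right_le s t⟩
end

section
/- Let G be a group, let i, j ≥ 1, set n = i + j, and let N₁, …, N_n be normal subgroups of G. Then [[N₁, …, N_i], [N_{i+1}, …, N_n]] is contained in the join (equivalently, the product) over all permutations σ of {1, …, n} of the left-normed iterated commutator subgroups [N_{σ(1)}, …, N_{σ(n)}]. -/
/-!
Induct on the length of the second list, for all normal targets `M` at once. Write the second
bracket as `⁅B, A⁆` and the first as `X`. The three subgroups lemma modulo `M` reduces
`⁅X, ⁅B, A⁆⁆ ≤ M` to `⁅⁅X, A⁆, B⁆ ≤ M`, which is the induction hypothesis with `A` moved into the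
first bracket, and to `⁅⁅X, B⁆, A⁆ ≤ M`, which says that `⁅X, B⁆` lies in the preimage of the
centralizer of `A` in `G ⧸ M`: the induction hypothesis for that normal subgroup.
-/

/-- The left-normed iterated commutator `[A₁, …, A_k]` of a list of subgroups
(`⊤` by convention on the empty list). -/
def iteratedCommutator {G : Type*} [Group G] : List (Subgroup G) → Subgroup G
  | [] => ⊤
  | A :: l => l.foldl (fun H K => ⁅H, K⁆) A

theorem List.exists_perm_eq_ofFn_comp {α : Type*} {n : ℕ} {f : Fin n → α} {l : List α}
    (h : l.Perm (List.ofFn f)) : ∃ σ : Equiv.Perm (Fin n), l = List.ofFn (f ∘ σ) := by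
  rw [List.ofFn_eq_map] at h
  obtain ⟨L, rfl, hL⟩ : Relation.Comp (· = List.map f ·) List.Perm l (List.finRange n) := by
    rwa [List.eq_map_comp_perm]
  have hlen : L.length = n := by simpa using hL.length_eq
  set g : Fin n → Fin n := fun k => L[k.cast hlen.symm]
  have hinj : Function.Injective g := fun a b hab =>
    Fin.ext (by simpa using (hL.nodup_iff.mpr (List.nodup_finRange n)).getElem_inj_iff.mp hab)
  refine ⟨Equiv.ofBijective g (Finite.injective_iff_bijective.mp hinj), ?_⟩
  rw [← List.map_ofFn]
  congr 1
  exact List.ext_getElem (by simpa using hlen) fun k _ _ => by simp [g]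

namespace Subgroup

variable {G : Type*} [Group G]

theorem commutator_le_iff_map_commutator_eq_bot (M : Subgroup G) [M.Normal] (H K : Subgroup G) :
    ⁅H, K⁆ ≤ M ↔ ⁅H.map (QuotientGroup.mk' M), K.map (QuotientGroup.mk' M)⁆ = ⊥ := by
  rw [← map_commutator, map_eq_bot_iff, QuotientGroup.ker_mk']

theorem commutator_commutator_le_of_rotate {M : Subgroup G} [M.Normal] {H₁ H₂ H₃ : Subgroup G}
    (h₁ : ⁅⁅H₂, H₃⁆, H₁⁆ ≤ M) (h₂ : ⁅⁅H₃, H₁⁆, H₂⁆ ≤ M) : ⁅⁅H₁, H₂⁆, H₃⁆ ≤ M := by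
  simp only [commutator_le_iff_map_commutator_eq_bot, map_commutator] at h₁ h₂ ⊢
  exact commutator_commutator_eq_bot_of_rotate h₁ h₂

def centralizerMod (M K : Subgroup G) [M.Normal] : Subgroup G :=
  (centralizer (K.map (QuotientGroup.mk' M))).comap (QuotientGroup.mk' M)

theorem le_centralizerMod_iff {M K H : Subgroup G} [M.Normal] :
    H ≤ centralizerMod M K ↔ ⁅H, K⁆ ≤ M := by
  rw [commutator_le_iff_map_commutator_eq_bot, commutator_eq_bot_iff_le_centralizer,
    centralizerMod, ← map_le_iff_le_comap]

instance centralizerMod_normal (M K : Subgroup G) [M.Normal] [K.Normal] :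
    (centralizerMod M K).Normal :=
  have := Normal.map inferInstance _ (QuotientGroup.mk'_surjective M) (H := K)
  inferInstanceAs ((centralizer _).comap _).Normal

end Subgroup

section IteratedCommutator

variable {G : Type*} [Group G]

theorem iteratedCommutator_append_singleton {l : List (Subgroup G)} (hl : l ≠ [])
    (A : Subgroup G) : iteratedCommutator (l ++ [A]) = ⁅iteratedCommutator l, A⁆ := by
  obtain ⟨B, l, rfl⟩ := List.exists_cons_of_ne_nil hl
  simp [iteratedCommutator]

theorem iteratedCommutator_normal {l : List (Subgroup G)} (hl : ∀ H ∈ l, H.Normal) :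
    (iteratedCommutator l).Normal := by
  induction l using List.reverseRecOn with
  | nil => exact Subgroup.normal_top
  | append_singleton l A ih =>
    have hA : A.Normal := hl A (by simp)
    rcases eq_or_ne l [] with rfl | hne
    · exact hA
    · have := ih fun H hH => hl H (by simp [hH])
      rw [iteratedCommutator_append_singleton hne]
      infer_instance

theorem commutator_iteratedCommutator_le {l₁ l₂ : List (Subgroup G)} (hl₁ : l₁ ≠ [])
    (hl₂ : l₂ ≠ []) (hnormal : ∀ H ∈ l₂, H.Normal) {M : Subgroup G} [M.Normal]
    (hM : ∀ l, l.Perm (l₁ ++ l₂) → iteratedCommutator l ≤ M) :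
    ⁅iteratedCommutator l₁, iteratedCommutator l₂⁆ ≤ M := by
  induction l₂ using List.reverseRecOn generalizing l₁ M with
  | nil => exact absurd rfl hl₂
  | append_singleton l₂ A ih =>
    rcases eq_or_ne l₂ [] with rfl | hl₂
    · rw [← iteratedCommutator_append_singleton hl₁]
      exact hM _ (List.Perm.refl _)
    have hA : A.Normal := hnormal A (by simp)
    have hnormal₂ : ∀ H ∈ l₂, H.Normal := fun H hH => hnormal H (by simp [hH])
    rw [iteratedCommutator_append_singleton hl₂, Subgroup.commutator_comm]
    refine Subgroup.commutator_commutator_le_of_rotate ?_ ?_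
    · rw [Subgroup.commutator_comm A, ← iteratedCommutator_append_singleton hl₁]
      refine ih (by simp) hl₂ hnormal₂ fun l hl => hM l (hl.trans ?_)
      simpa using (List.perm_append_comm (l₁ := [A])).append_left l₁
    · rw [← Subgroup.le_centralizerMod_iff]
      refine ih hl₁ hl₂ hnormal₂ fun l hl => ?_
      have hne : l ≠ [] := by rintro rfl; simp [List.nil_perm, hl₁] at hl
      rw [Subgroup.le_centralizerMod_iff, ← iteratedCommutator_append_singleton hne]
      exact hM _ (by simpa using hl.append_right [A])

end IteratedCommutator

theorem statement4 {G : Type*} [Group G] (i j : ℕ) (hi : 1 ≤ i) (hj : 1 ≤ j)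
    (N : Fin (i + j) → Subgroup G) (hN : ∀ k, (N k).Normal) :
    ⁅iteratedCommutator (List.ofFn fun k : Fin i => N (Fin.castAdd j k)),
        iteratedCommutator (List.ofFn fun k : Fin j => N (Fin.natAdd i k))⁆ ≤
      ⨆ σ : Equiv.Perm (Fin (i + j)),
        iteratedCommutator (List.ofFn fun k => N (σ k)) := by
  have (σ : Equiv.Perm (Fin (i + j))) :
      (iteratedCommutator (List.ofFn fun k => N (σ k))).Normal :=
    iteratedCommutator_normal (by simpa using fun k => hN (σ k))
  refine commutator_iteratedCommutator_le (by rw [Ne, List.ofFn_eq_nil_iff]; omega)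
    (by rw [Ne, List.ofFn_eq_nil_iff]; omega) (by simpa using fun k => hN _) fun l hl => ?_
  obtain ⟨σ, rfl⟩ := List.exists_perm_eq_ofFn_comp (hl.trans (List.Perm.of_eq List.ofFn_add.symm))
  exact le_iSup_of_le σ le_rfl
end

section
/- Fix d ≥ 1 and equip ℕ^d with the lexicographic (total, well-) order ≤. Then ℕ^d satisfies property (★) with respect to ≤: for every k ≥ 1 and all s, u₁, …, u_k ∈ ℕ^d, if s ≤ u₁ + ⋯ + u_k in the lexicographic order, then there exist s₁, …, s_k ∈ ℕ^d with s_j ≤ u_j (lexicographically) for each j and s = s₁ + ⋯ + s_k. -/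
/-- Property (★) for a relation `r` on a commutative monoid `M`. -/
def StarProp {M : Type*} [AddCommMonoid M] (r : M → M → Prop) : Prop :=
  ∀ d : ℕ, 1 ≤ d → ∀ (s : M) (u : Fin d → M),
    r s (∑ i, u i) → ∃ f : Fin d → M, (∀ i, r (f i) (u i)) ∧ s = ∑ i, f i


lemma toLexMono {d : ℕ} {a b : Fin d → ℕ} (h : a ≤ b) : toLex a ≤ toLex b := by
  have : WellFoundedLT (Fin d) := inferInstance
  exact Pi.toLex_monotone h

lemma lex_two {d : ℕ} (s u v : Fin d → ℕ) (h : toLex s ≤ toLex (u + v)) :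
    ∃ a b : Fin d → ℕ, toLex a ≤ toLex u ∧ toLex b ≤ toLex v ∧ s = a + b := by
  rcases h.lt_or_eq with h | h
  · obtain ⟨i, hpre, hi⟩ := h
    simp only [Pi.toLex_apply, Pi.add_apply] at hpre hi
    rcases lt_or_ge (s i) (u i) with hc | hc
    · refine ⟨fun j => if j < i then u j else s j, fun j => if j < i then v j else 0, ?_, ?_, ?_⟩
      · refine le_of_lt ⟨i, fun j hj => by simp [hj], ?_⟩
        simpa using hc
      · exact toLexMono fun j => by by_cases hj : j < i <;> simp [hj]
      · funext j
        by_cases hj : j < i <;> simp only [Pi.add_apply, hj, if_pos, if_neg, if_true, if_false]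
        · exact hpre j hj
        · omega
    · refine ⟨fun j => if j ≤ i then u j else 0, fun j => if j ≤ i then s j - u j else s j,
        ?_, ?_, ?_⟩
      · exact toLexMono fun j => by by_cases hj : j ≤ i <;> simp [hj]
      · refine le_of_lt ⟨i, fun j hj => ?_, ?_⟩
        · have := hpre j hj
          simp only [Pi.toLex_apply, hj.le, if_pos]
          omega
        · simp only [Pi.toLex_apply, le_refl, if_pos]
          omega
      · funext j
        simp only [Pi.add_apply]
        rcases lt_trichotomy j i with hj | hj | hj
        · have := hpre j hj
          simp only [hj.le, if_pos]
          omega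
        · subst hj
          simp only [le_refl, if_pos]
          omega
        · simp [not_le.2 hj]
  · exact ⟨u, v, le_refl _, le_refl _, toLex.injective h⟩

lemma lex_star {d : ℕ} : ∀ (k : ℕ) (s : Fin d → ℕ) (u : Fin k → Fin d → ℕ),
    toLex s ≤ toLex (∑ i, u i) →
    ∃ f : Fin k → Fin d → ℕ, (∀ i, toLex (f i) ≤ toLex (u i)) ∧ s = ∑ i, f i := by
  intro k
  induction k with
  | zero =>
    intro s u h
    refine ⟨fun i => i.elim0, fun i => i.elim0, ?_⟩
    simp only [Finset.univ_eq_empty, Finset.sum_empty] at h ⊢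
    have h0 : toLex (0 : Fin d → ℕ) ≤ toLex s :=
      toLexMono (fun j => Nat.zero_le (s j))
    exact toLex.injective (le_antisymm h h0)
  | succ n ih =>
    intro s u h
    rw [Fin.sum_univ_succ] at h
    obtain ⟨a, b, ha, hb, hab⟩ := lex_two s (u 0) (∑ i : Fin n, u i.succ) h
    obtain ⟨f, hf, hbf⟩ := ih b (fun i => u i.succ) hb
    refine ⟨Fin.cons a f, fun i => ?_, ?_⟩
    · refine Fin.cases ?_ ?_ i <;> simp [ha, hf]
    · rw [hab, hbf, Fin.sum_univ_succ]; simp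


/-- `ℕ^d` with the lexicographic order satisfies (★). -/
theorem statement9 (d : ℕ) (hd : 1 ≤ d) :
    StarProp (fun s u : Fin d → ℕ => toLex s ≤ toLex u) := by
  intro k _ s u h
  exact lex_star k s u h
end

section
/- Let M be a commutative monoid whose algebraic preorder ≼ (s ≼ u iff ∃t, s + t = u) satisfies property (★), let G be a group, and let φ : M → (subgroups of G) be a filter all of whose values are normal in G. Fix s ∈ M with s ≠ 0, and let H : ℕ → (normal subgroups of G) be a decreasing sequence with H_0 = φ_s and φ_s⁺ ≤ H_i ≤ φ_s for all i. Put X = (M × {0}) ∪ {u ∈ M : u ≼ s} × ℕ, and define α : X → (subgroups of G) by α_{(u,i)} = φ_u if i = 0 or u ≠ s, and α_{(s,i)} = H_i. Give M × ℕ the componentwise algebraic preorder. Then: (a) X generates the monoid M × ℕ; (b) if (x,i) ∈ X and (y,j) ≼ (x,i) then (y,j) ∈ X; (c) every value of α is a normal subgroup of G; (d) α is order-reversing on X: if (y,j), (x,i) ∈ X with (y,j) ≼ (x,i) then α_{(x,i)} ≤ α_{(y,j)}; and (e) M × ℕ satisfies property (★). -/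
/-- The algebraic preorder on a commutative monoid: `a ≼ b` iff `∃ t, a + t = b`. -/
def algLE {M : Type*} [AddCommMonoid M] (a b : M) : Prop := ∃ t, a + t = b

/-- The generating set `X = (M × {0}) ∪ {u : u ≼ s} × ℕ`. -/
def XSet (M : Type*) [AddCommMonoid M] (s : M) : Set (M × ℕ) :=
  {p | p.2 = 0 ∨ algLE p.1 s}

open Classical in
/-- The function `α` on `X`: `α_{(u,i)} = φ_u` if `i = 0` or `u ≠ s`, and `α_{(s,i)} = H_i`. -/
noncomputable def alphaMap {M : Type*} [AddCommMonoid M] {G : Type*} [Group G]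
    (φ : M → Subgroup G) (H : ℕ → Subgroup G) (s : M) (p : M × ℕ) : Subgroup G :=
  if p.2 = 0 ∨ p.1 ≠ s then φ p.1 else H p.2

lemma natStarAux : ∀ (d : ℕ) (s : ℕ) (u : Fin d → ℕ), s ≤ ∑ i, u i →
    ∃ f : Fin d → ℕ, (∀ i, f i ≤ u i) ∧ s = ∑ i, f i := by
  intro d
  induction d with
  | zero =>
    intro s u h
    simp only [Finset.univ_eq_empty, Finset.sum_empty, Nat.le_zero] at h
    exact ⟨fun i => 0, fun i => i.elim0, by simp [h]⟩
  | succ d ih =>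
    intro s u h
    rw [Fin.sum_univ_succ] at h
    have h' : s - min s (u 0) ≤ ∑ i : Fin d, u i.succ := by omega
    obtain ⟨g, hg, hgs⟩ := ih (s - min s (u 0)) (fun i => u i.succ) h'
    refine ⟨Fin.cons (min s (u 0)) g, ?_, ?_⟩
    · intro i
      refine Fin.cases ?_ ?_ i
      · simp
      · intro j; simpa using hg j
    · rw [Fin.sum_univ_succ]
      simp only [Fin.cons_zero, Fin.cons_succ]
      omega

lemma natStar : StarProp (algLE (M := ℕ)) := by
  intro d _ s u hsu
  obtain ⟨t, ht⟩ := hsu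
  obtain ⟨f, hf, hfs⟩ := natStarAux d s u (by omega)
  exact ⟨f, fun i => ⟨u i - f i, by have := hf i; omega⟩, hfs⟩

/-- Lemma 7 of the paper: `(M × ℕ, X, α)` satisfies the hypotheses of Theorem 3. -/
theorem statement11 {M : Type*} [AddCommMonoid M]
    (hMstar : StarProp (algLE (M := M)))
    {G : Type*} [Group G] (φ : M → Subgroup G) (hφ : IsFilter φ)
    (hφnorm : ∀ m : M, (φ m).Normal) (s : M) (hs : s ≠ 0)
    (H : ℕ → Subgroup G) (hHnorm : ∀ i, (H i).Normal) (hH0 : H 0 = φ s)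
    (hHanti : ∀ i j : ℕ, i ≤ j → H j ≤ H i)
    (hHbound : ∀ i, filterPlus φ s ≤ H i ∧ H i ≤ φ s) :
    AddSubmonoid.closure (XSet M s) = ⊤ ∧
    (∀ p ∈ XSet M s, ∀ q : M × ℕ, algLE q p → q ∈ XSet M s) ∧
    (∀ p : M × ℕ, (alphaMap φ H s p).Normal) ∧
    (∀ p ∈ XSet M s, ∀ q ∈ XSet M s, algLE q p → alphaMap φ H s p ≤ alphaMap φ H s q) ∧
    StarProp (algLE (M := M × ℕ)) := by
  -- monotonicity of φ along algLE
  have hmono : ∀ a b : M, algLE a b → φ b ≤ φ a := by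
    rintro a b ⟨t, rfl⟩
    exact le_trans (hφ.2 a t).2 inf_le_left
  refine ⟨?_, ?_, ?_, ?_, ?_⟩
  · -- (a) X generates M × ℕ
    rw [eq_top_iff]
    rintro ⟨m, n⟩ -
    have h1 : ((m, 0) : M × ℕ) ∈ XSet M s := Or.inl rfl
    have h2 : ((0, 1) : M × ℕ) ∈ XSet M s := Or.inr ⟨s, zero_add s⟩
    have heq : ((m, n) : M × ℕ) = (m, 0) + n • ((0, 1) : M × ℕ) := by
      simp [Prod.ext_iff]
    rw [heq]
    exact add_mem (AddSubmonoid.subset_closure h1)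
      (nsmul_mem (AddSubmonoid.subset_closure h2) n)
  · -- (b) X is downward closed
    rintro p hp q ⟨t, rfl⟩
    rcases hp with hp | hp
    · left
      have : q.2 + t.2 = 0 := hp
      omega
    · right
      obtain ⟨w, hw⟩ := hp
      exact ⟨t.1 + w, by rw [← add_assoc]; exact hw⟩
  · -- (c) normality
    intro p
    unfold alphaMap
    split
    · exact hφnorm _
    · exact hHnorm _
  · -- (d) order-reversing
    rintro p hp q hq ⟨t, rfl⟩
    have hq1 : q.1 + t.1 = (q + t).1 := rfl
    have hq2 : q.2 + t.2 = (q + t).2 := rfl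
    unfold alphaMap
    split
    case isTrue h1 =>
      split
      case isTrue h2 =>
        exact hmono q.1 (q + t).1 ⟨t.1, rfl⟩
      case isFalse h2 =>
        -- q.1 = s, q.2 ≠ 0 : target H q.2
        push_neg at h2
        obtain ⟨hq2ne, hq1s⟩ := h2
        -- s = q.1 ≼ (q+t).1 = s + t.1
        by_cases ht1 : t.1 = 0
        · -- then (q+t).1 = s, so q.2 = 0 from h1, contradiction... h1 : (q+t).2 = 0 ∨ (q+t).1 ≠ s
          rcases h1 with h1 | h1
          · exfalso; apply hq2ne; have : q.2 + t.2 = 0 := h1; omega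
          · exfalso; apply h1; rw [← hq1, hq1s, ht1, add_zero]
        · have : φ (q + t).1 ≤ filterPlus φ s := by
            rw [← hq1, hq1s]
            exact le_biSup (fun t => φ (s + t)) ht1
          exact le_trans this (hHbound q.2).1
    case isFalse h1 =>
      push_neg at h1
      obtain ⟨hp2ne, hp1s⟩ := h1
      split
      case isTrue h2 =>
        -- target φ q.1 ; H (q+t).2 ≤ φ s = φ (q+t).1 ≤ φ q.1
        refine le_trans (hHbound (q + t).2).2 ?_
        rw [← hp1s, ← hq1]
        exact hmono q.1 (q.1 + t.1) ⟨t.1, rfl⟩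
      case isFalse h2 =>
        exact hHanti q.2 (q + t).2 (by rw [← hq2]; omega)
  · -- (e) star property for M × ℕ
    intro d hd p u hpu
    obtain ⟨t, ht⟩ := hpu
    have h1 : algLE p.1 (∑ i, (u i).1) := by
      refine ⟨t.1, ?_⟩
      have := congrArg Prod.fst ht
      simpa [← Prod.fst_sum] using this
    have h2 : p.2 ≤ ∑ i, (u i).2 := by
      have := congrArg Prod.snd ht
      simp only [Prod.snd_add, Prod.snd_sum] at this
      omega
    obtain ⟨f1, hf1, hf1s⟩ := hMstar d hd p.1 (fun i => (u i).1) h1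
    obtain ⟨f2, hf2, hf2s⟩ := natStar d hd p.2 (fun i => (u i).2) ⟨(∑ i, (u i).2) - p.2, Nat.add_sub_cancel' h2⟩
    refine ⟨fun i => (f1 i, f2 i), fun i => ?_, ?_⟩
    · obtain ⟨w1, hw1⟩ := hf1 i
      obtain ⟨w2, hw2⟩ := hf2 i
      exact ⟨(w1, w2), Prod.ext hw1 hw2⟩
    · refine Prod.ext ?_ ?_
      · simpa [Prod.fst_sum] using hf1s
      · simpa [Prod.snd_sum] using hf2s
end

section
/- Let r ≥ 3 and consider the exterior-square bilinear map b : ℤ^r × ℤ^r → Λ²(ℤ^r), b(u,v) = u ∧ v. For ℤ-linear endomorphisms X, Y of ℤ^r, one has (X u) ∧ v = u ∧ (Y v) for all u, v ∈ ℤ^r if and only if there exists c ∈ ℤ with X = c·id and Y = c·id. Consequently the adjoint ring of b is isomorphic to ℤ. -/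
/-!
Take `v = eⱼ` in `X u ∧ v = u ∧ Y v` and compare the `(i, j)` Plücker coordinates
(`2 × 2` minors) of both sides: for `i ≠ j` this gives `(X u)ᵢ = uᵢ Y(eⱼ)ⱼ - uⱼ Y(eⱼ)ᵢ`.
A third index `k ∉ {i, j}`, available as `r ≥ 3`, forces the off-diagonal entries of `Y` to
vanish and all its diagonal entries to agree, so `X = c • id`; the condition is symmetric in
`X` and `Y` because `∧` is alternating, so `Y = c • id` too. Hence `ℤ → Adj(b)` is a ring
isomorphism.
-/

/-- The adjoint ring of a biadditive map `b : V × V → W`, as a subring of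
`End(V) × End(V)ᵒᵖ`. -/
def AdjointRing {V W : Type*} [AddCommGroup V] [AddCommGroup W]
    (b : V →+ V →+ W) : Subring (AddMonoid.End V × (AddMonoid.End V)ᵐᵒᵖ) where
  carrier := {P | ∀ u v : V, b (P.1 u) v = b u (P.2.unop v)}
  zero_mem' := by intro u v; simp
  one_mem' := by intro u v; simp
  add_mem' := by
    intro P Q hP hQ u v
    have h1 : (P + Q).1 u = P.1 u + Q.1 u := rfl
    have h2 : (P + Q).2.unop v = P.2.unop v + Q.2.unop v := rfl
    rw [h1, h2, map_add, AddMonoidHom.add_apply, map_add, hP u v, hQ u v]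
  neg_mem' := by
    intro P hP u v
    have h1 : (-P).1 u = -(P.1 u) := rfl
    have h2 : (-P).2.unop v = -(P.2.unop v) := rfl
    rw [h1, h2, map_neg, AddMonoidHom.neg_apply, map_neg, hP u v]
  mul_mem' := by
    intro P Q hP hQ u v
    have h1 : (P * Q).1 u = P.1 (Q.1 u) := rfl
    have h2 : (P * Q).2.unop v = Q.2.unop (P.2.unop v) := rfl
    rw [h1, h2, hP (Q.1 u) v, hQ u (P.2.unop v)]

/-- The wedge biadditive map `(u, v) ↦ u ∧ v` on `ℤ^r`, with values in the exterior
algebra (where `u ∧ v = ι u * ι v`). -/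
def wedgeB (r : ℕ) :
    (Fin r → ℤ) →+ (Fin r → ℤ) →+ ExteriorAlgebra ℤ (Fin r → ℤ) :=
  AddMonoidHom.mk'
    (fun u => AddMonoidHom.mk'
      (fun v => ExteriorAlgebra.ι ℤ u * ExteriorAlgebra.ι ℤ v)
      (fun v v' => by simp [map_add, mul_add]))
    (fun u u' => by ext v; simp [map_add, add_mul])

open ExteriorAlgebra

section Wedge

variable {R M : Type*} [CommRing R] [AddCommGroup M] [Module R M]

theorem ExteriorAlgebra.ι_mul_ι_eq_ιMulti (a b : M) : ι R a * ι R b = ιMulti R 2 ![a, b] := by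
  simp [ιMulti_apply]

theorem AlternatingMap.apply_eq_of_ι_mul_ι_eq {N : Type*} [AddCommGroup N] [Module R N]
    (f : M [⋀^Fin 2]→ₗ[R] N) {a b c d : M} (h : ι R a * ι R b = ι R c * ι R d) :
    f ![a, b] = f ![c, d] := by
  have := congrArg (liftAlternating (R := R) (Pi.single 2 f)) h
  simpa only [ι_mul_ι_eq_ιMulti, liftAlternating_apply_ιMulti, Pi.single_eq_same] using this

theorem ExteriorAlgebra.minor_eq_of_ι_mul_ι_eq {n : Type*} {a b c d : n → R}
    (h : ι R a * ι R b = ι R c * ι R d) (i j : n) :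
    a i * b j - a j * b i = c i * d j - c j * d i := by
  let minor := (Matrix.detRowAlternating (R := R)).compLinearMap (LinearMap.funLeft R R ![i, j])
  have minor_apply (x y : n → R) : minor ![x, y] = x i * y j - x j * y i :=
    (Matrix.det_fin_two _).trans (by simp [LinearMap.funLeft_apply])
  rw [← minor_apply, ← minor_apply]
  exact minor.apply_eq_of_ι_mul_ι_eq h

end Wedge

theorem Fintype.exists_ne_and_ne_of_two_lt_card {n : Type*} [Fintype n] [DecidableEq n]
    (hn : 2 < Fintype.card n) (i j : n) : ∃ k, k ≠ i ∧ k ≠ j := by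
  by_contra! h
  have hsub : Finset.univ ⊆ {i, j} := fun k _ => by
    rw [Finset.mem_insert, Finset.mem_singleton]
    exact (eq_or_ne k i).imp_right (h k)
  have := (Finset.card_le_card hsub).trans Finset.card_le_two
  rw [Finset.card_univ] at this
  omega

def IsWedgeAdjoint (R : Type*) {M : Type*} [CommRing R] [AddCommGroup M] [Module R M]
    (X Y : M → M) : Prop :=
  ∀ u v, ι R (X u) * ι R v = ι R u * ι R (Y v)

namespace IsWedgeAdjoint

section Module

variable {R M : Type*} [CommRing R] [AddCommGroup M] [Module R M] {X Y : M → M}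

theorem symm (h : IsWedgeAdjoint R X Y) : IsWedgeAdjoint R Y X := fun u v => by
  have anticomm (a b : M) : ι R a * ι R b = -(ι R b * ι R a) :=
    eq_neg_of_add_eq_zero_left (ι_add_mul_swap a b)
  rw [anticomm, ← h v u, anticomm, neg_neg]

theorem smul (c : R) : IsWedgeAdjoint R (c • ·) (c • · : M → M) := fun u v => by
  rw [map_smul, map_smul, smul_mul_assoc, mul_smul_comm]

end Module

variable {R n : Type*} [CommRing R] {X Y : (n → R) → n → R}

theorem minor_eq (h : IsWedgeAdjoint R X Y) (i j : n) (u v : n → R) :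
    X u i * v j - X u j * v i = u i * Y v j - u j * Y v i :=
  minor_eq_of_ι_mul_ι_eq (h u v) i j

variable [DecidableEq n]

theorem apply_eq_of_ne (h : IsWedgeAdjoint R X Y) {i j : n} (hij : i ≠ j) (u : n → R) :
    X u i = u i * Y (Pi.single j 1) j - u j * Y (Pi.single j 1) i := by
  simpa [Pi.single_apply, hij] using h.minor_eq i j u (Pi.single j 1)

theorem apply_single_self_of_ne (h : IsWedgeAdjoint R X Y) {i j : n} (hij : i ≠ j) :
    X (Pi.single i 1) i = Y (Pi.single j 1) j := by
  simpa [hij.symm] using h.apply_eq_of_ne hij (Pi.single i 1)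

variable [Fintype n]

theorem apply_single_of_ne (hn : 2 < Fintype.card n) (h : IsWedgeAdjoint R X Y) {i j : n}
    (hij : i ≠ j) : Y (Pi.single j 1) i = 0 := by
  obtain ⟨k, hki, hkj⟩ := Fintype.exists_ne_and_ne_of_two_lt_card hn i j
  have h1 := h.apply_eq_of_ne hij (Pi.single j 1)
  have h2 := h.apply_eq_of_ne hki.symm (Pi.single j 1)
  simp only [Pi.single_eq_of_ne hij, Pi.single_eq_of_ne hkj, Pi.single_eq_same] at h1 h2
  linear_combination h1 - h2

theorem apply_single_self_eq (hn : 2 < Fintype.card n) (h : IsWedgeAdjoint R X Y) (j l : n) :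
    Y (Pi.single j 1) j = Y (Pi.single l 1) l := by
  obtain ⟨i, hij, hil⟩ := Fintype.exists_ne_and_ne_of_two_lt_card hn j l
  rw [← h.apply_single_self_of_ne hij, ← h.apply_single_self_of_ne hil]

theorem eq_smul (hn : 2 < Fintype.card n) (h : IsWedgeAdjoint R X Y) (j : n) (u : n → R) :
    X u = Y (Pi.single j 1) j • u := by
  funext i
  obtain ⟨k, hki, -⟩ := Fintype.exists_ne_and_ne_of_two_lt_card hn i i
  rw [h.apply_eq_of_ne hki.symm, h.apply_single_of_ne hn hki.symm,
    h.apply_single_self_eq hn k j, Pi.smul_apply, smul_eq_mul]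
  ring

end IsWedgeAdjoint

theorem isWedgeAdjoint_iff {R n : Type*} [CommRing R] [DecidableEq n] [Fintype n]
    (hn : 2 < Fintype.card n) {X Y : (n → R) → n → R} :
    IsWedgeAdjoint R X Y ↔ ∃ c : R, (∀ u, X u = c • u) ∧ ∀ v, Y v = c • v := by
  refine ⟨fun h => ?_, fun ⟨c, hX, hY⟩ => ?_⟩
  · obtain ⟨j⟩ : Nonempty n := Fintype.card_pos_iff.mp (by omega)
    refine ⟨_, h.eq_smul hn j, fun v => ?_⟩
    rw [h.symm.eq_smul hn j, h.eq_smul hn j]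
    simp
  · rw [funext hX, funext hY]
    exact IsWedgeAdjoint.smul c

section AdjointRing

variable {r : ℕ}

theorem mem_adjointRing_wedgeB_iff {P} :
    P ∈ AdjointRing (wedgeB r) ↔ IsWedgeAdjoint ℤ P.1 P.2.unop :=
  Iff.rfl

theorem intCast_adjointRing_wedgeB_injective (hr : 0 < r) :
    Function.Injective (Int.cast : ℤ → AdjointRing (wedgeB r)) := fun c d h => by
  have := congrArg (fun P : AdjointRing (wedgeB r) => P.1.1 (Pi.single ⟨0, hr⟩ 1) ⟨0, hr⟩) h
  simpa using this

theorem intCast_adjointRing_wedgeB_surjective (hr : 2 < r) :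
    Function.Surjective (Int.cast : ℤ → AdjointRing (wedgeB r)) := fun P => by
  obtain ⟨c, hX, hY⟩ := (isWedgeAdjoint_iff (by simpa using hr)).mp
    (mem_adjointRing_wedgeB_iff.mp P.2)
  exact ⟨c, Subtype.ext (Prod.ext (AddMonoidHom.ext fun u => (hX u).symm)
    (MulOpposite.unop_injective (AddMonoidHom.ext fun v => (hY v).symm)))⟩

end AdjointRing

/-- For `r ≥ 3`, a pair of additive endomorphisms is adjoint with respect to the exterior
square `ℤ^r × ℤ^r → Λ²(ℤ^r)` iff both are a common integer scalar multiple of the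
identity; consequently the adjoint ring of the exterior square is isomorphic to `ℤ`. -/
theorem statement12 (r : ℕ) (hr : 3 ≤ r) :
    (∀ X Y : AddMonoid.End (Fin r → ℤ),
      (∀ u v : Fin r → ℤ,
          ExteriorAlgebra.ι ℤ (X u) * ExteriorAlgebra.ι ℤ v =
            ExteriorAlgebra.ι ℤ u * ExteriorAlgebra.ι ℤ (Y v)) ↔
        ∃ c : ℤ, (∀ u, X u = c • u) ∧ (∀ v, Y v = c • v)) ∧
    Nonempty (↥(AdjointRing (wedgeB r)) ≃+* ℤ) :=
  ⟨fun _ _ => isWedgeAdjoint_iff (by rw [Fintype.card_fin]; omega),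
    ⟨(RingEquiv.ofBijective (Int.castRingHom _)
      ⟨intCast_adjointRing_wedgeB_injective (by omega),
        intCast_adjointRing_wedgeB_surjective hr⟩).symm⟩⟩
end

section
/- Let R and S be commutative unital local rings. If the matrix rings M₂(R) and M₂(S) are isomorphic as rings, then R and S are isomorphic as rings. -/
section aux

variable {R : Type*} [CommRing R]

lemma central_eq_scalar (A : Matrix (Fin 2) (Fin 2) R)
    (hA : A ∈ Subring.center (Matrix (Fin 2) (Fin 2) R)) :
    A = Matrix.scalar (Fin 2) (A 0 0) := by
  rw [Subring.mem_center_iff] at hA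
  have h01 := hA (Matrix.single 0 1 1)
  have h10 := hA (Matrix.single 1 0 1)
  have e1 : A 1 1 = A 0 0 := by
    have := congrFun (congrFun h01 0) 1
    simpa [Matrix.mul_apply, Matrix.single, Fin.sum_univ_two] using this
  have e2 : A 1 0 = 0 := by
    have := (congrFun (congrFun h01 1) 1).symm
    simpa [Matrix.mul_apply, Matrix.single, Fin.sum_univ_two] using this
  have e3 : A 0 1 = 0 := by
    have := (congrFun (congrFun h10 0) 0).symm
    simpa [Matrix.mul_apply, Matrix.single, Fin.sum_univ_two] using this
  ext i j
  fin_cases i <;> fin_cases j <;>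
    simp [Matrix.scalar, Matrix.one_apply, e1, e2, e3]

lemma scalar_mem_center (r : R) :
    Matrix.scalar (Fin 2) r ∈ Subring.center (Matrix (Fin 2) (Fin 2) R) := by
  rw [Subring.mem_center_iff]
  intro g
  exact (Matrix.scalar_commute r (fun r' => mul_comm r r') g).symm

end aux

/-- If `M₂(R) ≅ M₂(S)` as rings, with `R`, `S` commutative local rings,
then `R ≅ S`. -/
theorem statement15 {R S : Type*} [CommRing R] [IsLocalRing R]
    [CommRing S] [IsLocalRing S]
    (h : Nonempty (Matrix (Fin 2) (Fin 2) R ≃+* Matrix (Fin 2) (Fin 2) S)) :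
    Nonempty (R ≃+* S) := by
  obtain ⟨e⟩ := h
  have key : ∀ r : R, e (Matrix.scalar (Fin 2) r)
      = Matrix.scalar (Fin 2) (e (Matrix.scalar (Fin 2) r) 0 0) := by
    intro r
    apply central_eq_scalar
    rw [Subring.mem_center_iff]
    intro g
    have : g = e (e.symm g) := (e.apply_symm_apply g).symm
    rw [this, ← map_mul, ← map_mul]
    congr 1
    exact Subring.mem_center_iff.mp (scalar_mem_center r) (e.symm g)
  have key' : ∀ s : S, e.symm (Matrix.scalar (Fin 2) s)
      = Matrix.scalar (Fin 2) (e.symm (Matrix.scalar (Fin 2) s) 0 0) := by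
    intro s
    apply central_eq_scalar
    rw [Subring.mem_center_iff]
    intro g
    have : g = e.symm (e g) := (e.symm_apply_apply g).symm
    rw [this, ← map_mul, ← map_mul]
    congr 1
    exact Subring.mem_center_iff.mp (scalar_mem_center s) (e g)
  have scalar_inj : ∀ (a b : S), Matrix.scalar (Fin 2) a = Matrix.scalar (Fin 2) b → a = b := by
    intro a b hab
    have := congrFun (congrFun hab 0) 0
    simpa [Matrix.scalar, Matrix.one_apply] using this
  refine ⟨{
    toFun := fun r => e (Matrix.scalar (Fin 2) r) 0 0
    invFun := fun s => e.symm (Matrix.scalar (Fin 2) s) 0 0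
    left_inv := ?_
    right_inv := ?_
    map_mul' := ?_
    map_add' := ?_ }⟩
  · intro r
    have h1 := key r
    have : e.symm (Matrix.scalar (Fin 2) (e (Matrix.scalar (Fin 2) r) 0 0))
        = Matrix.scalar (Fin 2) r := by rw [← h1, e.symm_apply_apply]
    have := congrFun (congrFun this 0) 0
    simpa [Matrix.scalar, Matrix.one_apply] using this
  · intro s
    have h1 := key' s
    have : e (Matrix.scalar (Fin 2) (e.symm (Matrix.scalar (Fin 2) s) 0 0))
        = Matrix.scalar (Fin 2) s := by rw [← h1, e.apply_symm_apply]
    have := congrFun (congrFun this 0) 0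
    simpa [Matrix.scalar, Matrix.one_apply] using this
  · intro x y
    show e (Matrix.scalar (Fin 2) (x * y)) 0 0 = _
    have : e (Matrix.scalar (Fin 2) (x * y)) = e (Matrix.scalar (Fin 2) x) * e (Matrix.scalar (Fin 2) y) := by
      rw [← map_mul]; congr 1; simp [map_mul]
    rw [this, key x, key y]
    simp [Matrix.mul_apply, Matrix.scalar, Matrix.one_apply, Fin.sum_univ_two]
  · intro x y
    show e (Matrix.scalar (Fin 2) (x + y)) 0 0 = _
    have : e (Matrix.scalar (Fin 2) (x + y)) = e (Matrix.scalar (Fin 2) x) + e (Matrix.scalar (Fin 2) y) := by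
      rw [← map_add]; congr 1; simp [map_add]
    rw [this]; rfl
end

section
/- Let R and S be commutative unital local rings, and let H(R) denote the Heisenberg group over R: the group of upper unitriangular 3×3 matrices over R, equivalently the set R × R × R with multiplication (a,b,c)·(a',b',c') = (a + a', b + b', c + c' + a·b'). If H(R) and H(S) are isomorphic as groups, then R and S are isomorphic as rings. -/
/-- The Heisenberg group over `R`: `R × R × R` with
`(a,b,c)·(a',b',c') = (a+a', b+b', c+c'+a·b')`; equivalently the group of
upper unitriangular `3×3` matrices over `R`. -/
@[ext]
structure Heisenberg (R : Type*) where
  a : R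
  b : R
  c : R

namespace Heisenberg

variable {R : Type*} [CommRing R]

instance : Mul (Heisenberg R) :=
  ⟨fun x y => ⟨x.a + y.a, x.b + y.b, x.c + y.c + x.a * y.b⟩⟩

instance : One (Heisenberg R) := ⟨⟨0, 0, 0⟩⟩

instance : Inv (Heisenberg R) :=
  ⟨fun x => ⟨-x.a, -x.b, -x.c + x.a * x.b⟩⟩

@[simp] lemma mul_a (x y : Heisenberg R) : (x * y).a = x.a + y.a := rfl
@[simp] lemma mul_b (x y : Heisenberg R) : (x * y).b = x.b + y.b := rfl
@[simp] lemma mul_c (x y : Heisenberg R) : (x * y).c = x.c + y.c + x.a * y.b := rfl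
@[simp] lemma one_a : (1 : Heisenberg R).a = 0 := rfl
@[simp] lemma one_b : (1 : Heisenberg R).b = 0 := rfl
@[simp] lemma one_c : (1 : Heisenberg R).c = 0 := rfl
@[simp] lemma inv_a (x : Heisenberg R) : x⁻¹.a = -x.a := rfl
@[simp] lemma inv_b (x : Heisenberg R) : x⁻¹.b = -x.b := rfl
@[simp] lemma inv_c (x : Heisenberg R) : x⁻¹.c = -x.c + x.a * x.b := rfl

instance : Group (Heisenberg R) where
  mul_assoc x y z := by ext <;> simp <;> ring
  one_mul x := by ext <;> simp
  mul_one x := by ext <;> simp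
  inv_mul_cancel x := by ext <;> simp

lemma commutator_eq (u v : Heisenberg R) :
    u * v * u⁻¹ * v⁻¹ = ⟨0, 0, u.a * v.b - v.a * u.b⟩ := by
  ext <;> simp <;> ring

lemma central_comm (c : R) (w : Heisenberg R) :
    (⟨0, 0, c⟩ : Heisenberg R) * w = w * ⟨0, 0, c⟩ := by
  ext <;> simp [add_comm]

lemma central_mul (c d : R) :
    (⟨0, 0, c⟩ : Heisenberg R) * ⟨0, 0, d⟩ = ⟨0, 0, c + d⟩ := by
  ext <;> simp

end Heisenberg

/-- If the Heisenberg groups over commutative local rings `R` and `S` are isomorphic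
as groups, then `R ≅ S` as rings. -/
theorem statement16 {R S : Type*} [CommRing R] [IsLocalRing R]
    [CommRing S] [IsLocalRing S]
    (h : Nonempty (Heisenberg R ≃* Heisenberg S)) :
    Nonempty (R ≃+* S) := by
  obtain ⟨φ⟩ := h
  classical
  -- φ maps the center to the center
  have hz : ∀ c : R, φ ⟨0, 0, c⟩ = ⟨0, 0, (φ ⟨0, 0, c⟩).c⟩ := by
    intro c
    have h1 : ∀ v : Heisenberg S, φ ⟨0, 0, c⟩ * v = v * φ ⟨0, 0, c⟩ := by
      intro v
      have h2 := congrArg φ (Heisenberg.central_comm c (φ.symm v))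
      simpa [map_mul] using h2
    have ha : (φ ⟨0, 0, c⟩).a = 0 := by
      have h2 := congrArg Heisenberg.c (h1 ⟨0, 1, 0⟩)
      simp at h2
      linear_combination h2
    have hb : (φ ⟨0, 0, c⟩).b = 0 := by
      have h2 := congrArg Heisenberg.c (h1 ⟨1, 0, 0⟩)
      simp at h2
      linear_combination h2
    ext <;> simp [ha, hb]
  have hz' : ∀ t : S, φ.symm ⟨0, 0, t⟩ = ⟨0, 0, (φ.symm ⟨0, 0, t⟩).c⟩ := by
    intro t
    have h1 : ∀ v : Heisenberg R, φ.symm ⟨0, 0, t⟩ * v = v * φ.symm ⟨0, 0, t⟩ := by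
      intro v
      have h2 := congrArg φ.symm (Heisenberg.central_comm t (φ v))
      simpa [map_mul] using h2
    have ha : (φ.symm ⟨0, 0, t⟩).a = 0 := by
      have h2 := congrArg Heisenberg.c (h1 ⟨0, 1, 0⟩)
      simp at h2
      linear_combination h2
    have hb : (φ.symm ⟨0, 0, t⟩).b = 0 := by
      have h2 := congrArg Heisenberg.c (h1 ⟨1, 0, 0⟩)
      simp at h2
      linear_combination h2
    ext <;> simp [ha, hb]
  -- the additive bijection g and its inverse g'
  set g : R → S := fun c => (φ ⟨0, 0, c⟩).c with hgdef
  set g' : S → R := fun t => (φ.symm ⟨0, 0, t⟩).c with hg'def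
  have hzg : ∀ c : R, φ ⟨0, 0, c⟩ = ⟨0, 0, g c⟩ := hz
  have hzg' : ∀ t : S, φ.symm ⟨0, 0, t⟩ = ⟨0, 0, g' t⟩ := hz'
  have hgg' : ∀ t : S, g (g' t) = t := by
    intro t
    have h1 := φ.apply_symm_apply (⟨0, 0, t⟩ : Heisenberg S)
    rw [hzg' t, hzg (g' t)] at h1
    exact congrArg Heisenberg.c h1
  have hg'g : ∀ c : R, g' (g c) = c := by
    intro c
    have h1 := φ.symm_apply_apply (⟨0, 0, c⟩ : Heisenberg R)
    rw [hzg c, hzg' (g c)] at h1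
    exact congrArg Heisenberg.c h1
  -- key commutator identity
  have key : ∀ r s : R, g (r * s) =
      (φ ⟨r, 0, 0⟩).a * (φ ⟨0, s, 0⟩).b - (φ ⟨0, s, 0⟩).a * (φ ⟨r, 0, 0⟩).b := by
    intro r s
    have h0 : (⟨r, 0, 0⟩ : Heisenberg R) * ⟨0, s, 0⟩ * (⟨r, 0, 0⟩ : Heisenberg R)⁻¹ *
        (⟨0, s, 0⟩ : Heisenberg R)⁻¹ = ⟨0, 0, r * s⟩ := by
      rw [Heisenberg.commutator_eq]; ext <;> simp
    have h1 := congrArg φ h0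
    simp only [map_mul, map_inv] at h1
    rw [Heisenberg.commutator_eq, hzg] at h1
    exact (congrArg Heisenberg.c h1).symm
  -- symmetry relations
  have hAB : ∀ r s : R, (φ ⟨r, 0, 0⟩).a * (φ ⟨s, 0, 0⟩).b
      = (φ ⟨s, 0, 0⟩).a * (φ ⟨r, 0, 0⟩).b := by
    intro r s
    have h0 : (⟨r, 0, 0⟩ : Heisenberg R) * ⟨s, 0, 0⟩ = ⟨s, 0, 0⟩ * ⟨r, 0, 0⟩ := by
      ext <;> simp [add_comm]
    have h1 := congrArg Heisenberg.c (congrArg φ h0)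
    simp only [map_mul, Heisenberg.mul_c] at h1
    linear_combination h1
  -- g(1) is a unit
  have hsum : ∀ t : S, t = (φ ⟨1, 0, 0⟩).a * (φ ⟨0, g' t, 0⟩).b
      - (φ ⟨0, g' t, 0⟩).a * (φ ⟨1, 0, 0⟩).b := by
    intro t
    have h1 := key 1 (g' t)
    rw [one_mul, hgg'] at h1
    exact h1
  have hAorB : IsUnit ((φ ⟨1, 0, 0⟩).a) ∨ IsUnit ((φ ⟨1, 0, 0⟩).b) := by
    by_contra hcon
    push_neg at hcon
    have h1 := hsum 1
    have h2 : IsUnit ((φ ⟨1, 0, 0⟩).a * (φ ⟨0, g' 1, 0⟩).b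
        + -((φ ⟨0, g' 1, 0⟩).a * (φ ⟨1, 0, 0⟩).b)) := by
      rw [← sub_eq_add_neg, ← h1]; exact isUnit_one
    rcases IsLocalRing.isUnit_or_isUnit_of_isUnit_add h2 with h3 | h3
    · exact hcon.1 (isUnit_of_mul_isUnit_left h3)
    · have h4 := h3.neg
      rw [neg_neg] at h4
      exact hcon.2 (isUnit_of_mul_isUnit_right h4)
  have hg1 : IsUnit (g 1) := by
    by_contra hg1
    have hkey1 : ∀ r : R, g r = (φ ⟨r, 0, 0⟩).a * (φ ⟨0, 1, 0⟩).b
        - (φ ⟨0, 1, 0⟩).a * (φ ⟨r, 0, 0⟩).b := by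
      intro r
      have h1 := key r 1
      rwa [mul_one] at h1
    rcases hAorB with hA1 | hB1
    · have hr : ∀ r : R, (φ ⟨1, 0, 0⟩).a * g r = (φ ⟨r, 0, 0⟩).a * g 1 := by
        intro r
        rw [hkey1 r, hkey1 1]
        linear_combination (- (φ ⟨0, 1, 0⟩).a) * hAB 1 r
      have h2 := hr (g' 1)
      rw [hgg', mul_one] at h2
      rw [h2] at hA1
      exact hg1 (isUnit_of_mul_isUnit_right hA1)
    · have hr : ∀ r : R, (φ ⟨1, 0, 0⟩).b * g r = (φ ⟨r, 0, 0⟩).b * g 1 := by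
        intro r
        rw [hkey1 r, hkey1 1]
        linear_combination (- (φ ⟨0, 1, 0⟩).b) * hAB 1 r
      have h2 := hr (g' 1)
      rw [hgg', mul_one] at h2
      rw [h2] at hB1
      exact hg1 (isUnit_of_mul_isUnit_right hB1)
  -- g is additive
  have gadd : ∀ c d : R, g (c + d) = g c + g d := by
    intro c d
    have h1 := congrArg φ (Heisenberg.central_mul c d)
    rw [map_mul, hzg c, hzg d, hzg (c + d), Heisenberg.central_mul] at h1
    exact (congrArg Heisenberg.c h1).symm
  -- g is multiplicative up to the unit g 1
  have hmul : ∀ r s : R, g (r * s) * g 1 = g r * g s := by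
    intro r s
    have k1 := key r s
    have k2 := key r 1
    have k3 := key 1 s
    have k4 := key 1 1
    rw [mul_one] at k2 k4
    rw [one_mul] at k3
    rw [k1, k2, k3, k4]
    linear_combination ((φ ⟨0, s, 0⟩).a * (φ ⟨0, 1, 0⟩).b
      - (φ ⟨0, 1, 0⟩).a * (φ ⟨0, s, 0⟩).b) * hAB r 1
  -- assemble the ring isomorphism
  obtain ⟨e, he⟩ := hg1.exists_right_inv
  refine ⟨{ toFun := fun r => g r * e
            invFun := fun t => g' (t * g 1)
            left_inv := ?_
            right_inv := ?_
            map_mul' := ?_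
            map_add' := ?_ }⟩
  · intro r
    have h1 : g r * e * g 1 = g r := by
      rw [mul_assoc, mul_comm e, he, mul_one]
    simp only [h1, hg'g]
  · intro t
    simp only [hgg', mul_assoc, he, mul_one]
  · intro r s
    calc g (r * s) * e = g (r * s) * (g 1 * e) * e := by rw [he, mul_one]
      _ = g (r * s) * g 1 * e * e := by ring
      _ = g r * g s * e * e := by rw [hmul]
      _ = g r * e * (g s * e) := by ring
  · intro r s
    simp only [gadd, add_mul]
end

section
/- Let p be a prime, let V and W be finite-dimensional vector spaces over 𝔽_p = ℤ/pℤ, and let ∘ : V × V → W be a symmetric 𝔽_p-bilinear map that is nontrivial (u ∘ v ≠ 0 for some u, v). Define R(∘) to be the abelian group 𝔽_p ⊕ V ⊕ W with multiplication (s,v,w)·(s',v',w') = (ss', sv' + s'v, sw' + v∘v' + s'w). Then R(∘) is a commutative associative unital ring with identity (1,0,0); it is local; its Jacobson radical is J = 0 ⊕ V ⊕ W; J² = 0 ⊕ 0 ⊕ span{u ∘ v : u, v ∈ V}, which is nonzero; and J³ = 0. In particular J(R) ⊋ J(R)² ⊋ 0. -/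
/-! Every `x` with `x.s = 0` satisfies `x ^ 3 = 0`, so `x` is a unit exactly when `x.s ≠ 0`
(a unit `(s, 0, 0)` plus a nilpotent), and `R(∘)` is local with maximal ideal
`J = {x | x.s = 0}`. The product of two elements of `J` is `(0, 0, x.v ∘ y.v)`, and `J` kills
every element of the form `(0, 0, w)`; this gives `J²` and `J³ = 0`. -/

/-- The ring `R(∘) = 𝔽_p ⊕ V ⊕ W` associated to a symmetric bilinear map
`∘ : V × V → W`, with multiplication
`(s,v,w)·(s',v',w') = (ss', sv' + s'v, sw' + v∘v' + s'w)`. -/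
@[ext]
structure RingOf (p : ℕ) (V W : Type*) [AddCommGroup V] [Module (ZMod p) V]
    [AddCommGroup W] [Module (ZMod p) W]
    (b : V →ₗ[ZMod p] V →ₗ[ZMod p] W) (hb : ∀ u v, b u v = b v u) where
  s : ZMod p
  v : V
  w : W

namespace RingOf

variable {p : ℕ} {V W : Type*} [AddCommGroup V] [Module (ZMod p) V]
  [AddCommGroup W] [Module (ZMod p) W]
  {b : V →ₗ[ZMod p] V →ₗ[ZMod p] W} {hb : ∀ u v, b u v = b v u}

instance : Add (RingOf p V W b hb) := ⟨fun x y => ⟨x.s + y.s, x.v + y.v, x.w + y.w⟩⟩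
instance : Zero (RingOf p V W b hb) := ⟨⟨0, 0, 0⟩⟩
instance : Neg (RingOf p V W b hb) := ⟨fun x => ⟨-x.s, -x.v, -x.w⟩⟩
instance : Mul (RingOf p V W b hb) :=
  ⟨fun x y => ⟨x.s * y.s, x.s • y.v + y.s • x.v, x.s • y.w + b x.v y.v + y.s • x.w⟩⟩
instance : One (RingOf p V W b hb) := ⟨⟨1, 0, 0⟩⟩

@[simp] lemma add_s (x y : RingOf p V W b hb) : (x + y).s = x.s + y.s := rfl
@[simp] lemma add_v (x y : RingOf p V W b hb) : (x + y).v = x.v + y.v := rfl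
@[simp] lemma add_w (x y : RingOf p V W b hb) : (x + y).w = x.w + y.w := rfl
@[simp] lemma zero_s : (0 : RingOf p V W b hb).s = 0 := rfl
@[simp] lemma zero_v : (0 : RingOf p V W b hb).v = 0 := rfl
@[simp] lemma zero_w : (0 : RingOf p V W b hb).w = 0 := rfl
@[simp] lemma neg_s (x : RingOf p V W b hb) : (-x).s = -x.s := rfl
@[simp] lemma neg_v (x : RingOf p V W b hb) : (-x).v = -x.v := rfl
@[simp] lemma neg_w (x : RingOf p V W b hb) : (-x).w = -x.w := rfl
@[simp] lemma mul_s (x y : RingOf p V W b hb) : (x * y).s = x.s * y.s := rfl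
@[simp] lemma mul_v (x y : RingOf p V W b hb) : (x * y).v = x.s • y.v + y.s • x.v := rfl
@[simp] lemma mul_w (x y : RingOf p V W b hb) :
    (x * y).w = x.s • y.w + b x.v y.v + y.s • x.w := rfl
@[simp] lemma one_s : (1 : RingOf p V W b hb).s = 1 := rfl
@[simp] lemma one_v : (1 : RingOf p V W b hb).v = 0 := rfl
@[simp] lemma one_w : (1 : RingOf p V W b hb).w = 0 := rfl

instance : CommRing (RingOf p V W b hb) where
  add_assoc x y z := by ext <;> simp [add_assoc]
  zero_add x := by ext <;> simp
  add_zero x := by ext <;> simp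
  add_comm x y := by ext <;> simp [add_comm]
  neg_add_cancel x := by ext <;> simp
  nsmul := nsmulRec
  zsmul := zsmulRec
  mul_assoc x y z := by
    ext
    · simp [mul_assoc]
    · simp only [mul_v, mul_s, smul_add, smul_smul]
      rw [mul_comm z.s x.s, mul_comm z.s y.s]
      abel
    · simp only [mul_w, mul_v, mul_s, map_add, map_smul, LinearMap.add_apply,
        LinearMap.smul_apply, smul_add, smul_smul]
      rw [mul_comm z.s x.s, mul_comm z.s y.s]
      abel
  one_mul x := by ext <;> simp
  mul_one x := by ext <;> simp
  left_distrib x y z := by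
    ext
    · simp [mul_add]
    · simp only [mul_v, add_v, add_s, smul_add, add_smul]; abel
    · simp only [mul_w, add_w, add_v, add_s, smul_add, add_smul, map_add,
        LinearMap.add_apply]
      abel
  right_distrib x y z := by
    ext
    · simp [add_mul]
    · simp only [mul_v, add_v, add_s, smul_add, add_smul]; abel
    · simp only [mul_w, add_w, add_v, add_s, smul_add, add_smul, map_add,
        LinearMap.add_apply]
      abel
  zero_mul x := by ext <;> simp
  mul_zero x := by ext <;> simp
  mul_comm x y := by
    ext
    · simp [mul_comm]
    · simp [add_comm]
    · simp only [mul_w, hb x.v y.v]; abel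

end RingOf

namespace RingOf

variable {p : ℕ} {V W : Type*} [AddCommGroup V] [Module (ZMod p) V]
  [AddCommGroup W] [Module (ZMod p) W]
  {b : V →ₗ[ZMod p] V →ₗ[ZMod p] W} {hb : ∀ u v, b u v = b v u}

local notation "𝓡" => RingOf p V W b hb

open IsLocalRing

def sHom : 𝓡 →+* ZMod p where
  toFun := s
  map_one' := rfl
  map_mul' _ _ := rfl
  map_zero' := rfl
  map_add' _ _ := rfl

lemma mul_eq_of_s_eq_zero {x y : 𝓡} (hx : x.s = 0) (hy : y.s = 0) :
    x * y = ⟨0, 0, b x.v y.v⟩ := by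
  ext <;> simp [hx, hy]

lemma isNilpotent_of_s_eq_zero {x : 𝓡} (hx : x.s = 0) : IsNilpotent x := by
  refine ⟨3, ?_⟩
  rw [pow_three', mul_eq_of_s_eq_zero hx hx]
  ext <;> simp [hx]

lemma isUnit_iff [Fact p.Prime] {x : 𝓡} : IsUnit x ↔ x.s ≠ 0 := by
  refine ⟨fun hx => (hx.map sHom).ne_zero, fun hs => ?_⟩
  have hunit : IsUnit (⟨x.s, 0, 0⟩ : 𝓡) :=
    IsUnit.of_mul_eq_one ⟨x.s⁻¹, 0, 0⟩ (by ext <;> simp [mul_inv_cancel₀ hs])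
  have hx : x = ⟨x.s, 0, 0⟩ + ⟨0, x.v, x.w⟩ := by ext <;> simp
  rw [hx]
  exact (isNilpotent_of_s_eq_zero rfl).isUnit_add_left_of_commute hunit (Commute.all _ _)

instance [Fact p.Prime] : IsLocalRing 𝓡 :=
  have : Nontrivial 𝓡 := sHom.domain_nontrivial
  .of_nonunits_add fun x y hx hy => by
    simp only [mem_nonunits_iff, isUnit_iff, not_not, add_s] at hx hy ⊢
    rw [hx, hy, add_zero]

lemma mem_maximalIdeal_iff [Fact p.Prime] {x : 𝓡} : x ∈ maximalIdeal 𝓡 ↔ x.s = 0 := by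
  rw [mem_maximalIdeal, mem_nonunits_iff, isUnit_iff, not_not]

def idealOfSubmodule (N : Submodule (ZMod p) W) : Ideal 𝓡 where
  carrier := {x | x.s = 0 ∧ x.v = 0 ∧ x.w ∈ N}
  add_mem' := by
    rintro x y ⟨hxs, hxv, hxw⟩ ⟨hys, hyv, hyw⟩
    exact ⟨by simp [hxs, hys], by simp [hxv, hyv], N.add_mem hxw hyw⟩
  zero_mem' := ⟨rfl, rfl, N.zero_mem⟩
  smul_mem' := by
    rintro r x ⟨hxs, hxv, hxw⟩
    refine ⟨by simp [hxs], by simp [hxs, hxv], ?_⟩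
    simpa [hxs, hxv] using N.smul_mem r.s hxw

lemma mem_idealOfSubmodule {N : Submodule (ZMod p) W} {x : 𝓡} :
    x ∈ idealOfSubmodule N ↔ x.s = 0 ∧ x.v = 0 ∧ x.w ∈ N :=
  Iff.rfl

def submoduleOfIdeal (I : Ideal 𝓡) : Submodule (ZMod p) W where
  carrier := {w | (⟨0, 0, w⟩ : 𝓡) ∈ I}
  add_mem' {w w'} hw hw' := by
    have h : (⟨0, 0, w + w'⟩ : 𝓡) = ⟨0, 0, w⟩ + ⟨0, 0, w'⟩ := by ext <;> simp
    show (⟨0, 0, w + w'⟩ : 𝓡) ∈ I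
    exact h ▸ I.add_mem hw hw'
  zero_mem' := I.zero_mem
  smul_mem' c w hw := by
    have h : (⟨0, 0, c • w⟩ : 𝓡) = ⟨c, 0, 0⟩ * ⟨0, 0, w⟩ := by ext <;> simp
    show (⟨0, 0, c • w⟩ : 𝓡) ∈ I
    exact h ▸ I.mul_mem_left _ hw

lemma idealOfSubmodule_le {N : Submodule (ZMod p) W} {I : Ideal 𝓡}
    (h : N ≤ submoduleOfIdeal I) : idealOfSubmodule N ≤ I := by
  rintro x ⟨hs, hv, hw⟩
  have hx : x = ⟨0, 0, x.w⟩ := by ext <;> simp [hs, hv]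
  rw [hx]
  exact h hw

lemma maximalIdeal_sq [Fact p.Prime] :
    maximalIdeal 𝓡 ^ 2 = idealOfSubmodule (Submodule.span (ZMod p) {w | ∃ u v, b u v = w}) := by
  refine le_antisymm ?_ (idealOfSubmodule_le (Submodule.span_le.2 ?_))
  · rw [sq, Ideal.mul_le]
    intro x hx y hy
    rw [mem_maximalIdeal_iff] at hx hy
    rw [mul_eq_of_s_eq_zero hx hy]
    exact ⟨rfl, rfl, Submodule.subset_span ⟨_, _, rfl⟩⟩
  · rintro _ ⟨u, v, rfl⟩
    have h : (⟨0, 0, b u v⟩ : 𝓡) = ⟨0, u, 0⟩ * ⟨0, v, 0⟩ := by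
      ext <;> simp
    show (⟨0, 0, b u v⟩ : 𝓡) ∈ maximalIdeal 𝓡 ^ 2
    rw [h, sq]
    exact Ideal.mul_mem_mul (mem_maximalIdeal_iff.2 rfl) (mem_maximalIdeal_iff.2 rfl)

lemma idealOfSubmodule_mul_maximalIdeal [Fact p.Prime] (N : Submodule (ZMod p) W) :
    idealOfSubmodule N * maximalIdeal 𝓡 = ⊥ := by
  refine le_bot_iff.1 (Ideal.mul_le.2 fun x ⟨hs, hv, _⟩ y hy => ?_)
  rw [mem_maximalIdeal_iff] at hy
  rw [Ideal.mem_bot, mul_eq_of_s_eq_zero hs hy, hv, map_zero, LinearMap.zero_apply]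
  rfl

lemma maximalIdeal_pow_three [Fact p.Prime] : maximalIdeal 𝓡 ^ 3 = ⊥ := by
  rw [pow_succ, maximalIdeal_sq, idealOfSubmodule_mul_maximalIdeal]

lemma maximalIdeal_sq_ne_bot [Fact p.Prime] {u v : V} (h : b u v ≠ 0) :
    maximalIdeal 𝓡 ^ 2 ≠ ⊥ := by
  intro hbot
  have hmem : (⟨0, 0, b u v⟩ : 𝓡) ∈ maximalIdeal 𝓡 ^ 2 := by
    rw [maximalIdeal_sq]
    exact ⟨rfl, rfl, Submodule.subset_span ⟨u, v, rfl⟩⟩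
  rw [hbot, Ideal.mem_bot] at hmem
  exact h (congrArg w hmem)

lemma maximalIdeal_sq_lt [Fact p.Prime] [Nontrivial V] : maximalIdeal 𝓡 ^ 2 < maximalIdeal 𝓡 := by
  obtain ⟨u, hu⟩ := exists_ne (0 : V)
  refine lt_of_le_of_ne (Ideal.pow_le_self two_ne_zero) fun h => hu ?_
  have hmem : (⟨0, u, 0⟩ : 𝓡) ∈ maximalIdeal 𝓡 ^ 2 := by
    rw [h]
    exact mem_maximalIdeal_iff.2 rfl
  rw [maximalIdeal_sq] at hmem
  exact hmem.2.1

end RingOf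

theorem statement17_general (p : ℕ) (hp : p.Prime) {V W : Type*}
    [AddCommGroup V] [Module (ZMod p) V]
    [AddCommGroup W] [Module (ZMod p) W]
    (b : V →ₗ[ZMod p] V →ₗ[ZMod p] W) (hb : ∀ u v, b u v = b v u)
    (hnt : ∃ u v, b u v ≠ 0) :
    (1 : RingOf p V W b hb) = ⟨1, 0, 0⟩ ∧
    (∀ x y : RingOf p V W b hb, x * y = y * x) ∧
    (∀ x y z : RingOf p V W b hb, x * y * z = x * (y * z)) ∧
    IsLocalRing (RingOf p V W b hb) ∧
    (∀ x : RingOf p V W b hb, x ∈ (⊥ : Ideal (RingOf p V W b hb)).jacobson ↔ x.s = 0) ∧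
    (∀ x : RingOf p V W b hb,
      x ∈ (⊥ : Ideal (RingOf p V W b hb)).jacobson ^ 2 ↔
        x.s = 0 ∧ x.v = 0 ∧ x.w ∈ Submodule.span (ZMod p) {w : W | ∃ u v, b u v = w}) ∧
    (⊥ : Ideal (RingOf p V W b hb)).jacobson ^ 2 ≠ ⊥ ∧
    (⊥ : Ideal (RingOf p V W b hb)).jacobson ^ 3 = ⊥ ∧
    (⊥ : Ideal (RingOf p V W b hb)).jacobson ^ 2 < (⊥ : Ideal (RingOf p V W b hb)).jacobson := by
  have := Fact.mk hp
  obtain ⟨u, v, huv⟩ := hnt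
  have : Nontrivial V := ⟨⟨u, 0, by rintro rfl; simp at huv⟩⟩
  rw [IsLocalRing.jacobson_eq_maximalIdeal ⊥ bot_ne_top]
  exact ⟨rfl, mul_comm, mul_assoc, inferInstance, fun _ => RingOf.mem_maximalIdeal_iff,
    fun _ => by rw [RingOf.maximalIdeal_sq, RingOf.mem_idealOfSubmodule], RingOf.maximalIdeal_sq_ne_bot huv,
    RingOf.maximalIdeal_pow_three, RingOf.maximalIdeal_sq_lt⟩

/-- The ring `R(∘)` is a commutative associative unital ring with identity `(1,0,0)`
(witnessed by the `CommRing` instance constructed above); it is local, its Jacobson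
radical is `J = 0 ⊕ V ⊕ W`, `J² = 0 ⊕ 0 ⊕ span{u ∘ v}` is nonzero, and `J³ = 0`;
in particular `J ⊋ J² ⊋ 0`. -/
theorem statement17 (p : ℕ) (hp : p.Prime) {V W : Type*}
    [AddCommGroup V] [Module (ZMod p) V] [Module.Finite (ZMod p) V]
    [AddCommGroup W] [Module (ZMod p) W] [Module.Finite (ZMod p) W]
    (b : V →ₗ[ZMod p] V →ₗ[ZMod p] W) (hb : ∀ u v, b u v = b v u)
    (hnt : ∃ u v, b u v ≠ 0) :
    (1 : RingOf p V W b hb) = ⟨1, 0, 0⟩ ∧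
    (∀ x y : RingOf p V W b hb, x * y = y * x) ∧
    (∀ x y z : RingOf p V W b hb, x * y * z = x * (y * z)) ∧
    IsLocalRing (RingOf p V W b hb) ∧
    (∀ x : RingOf p V W b hb, x ∈ (⊥ : Ideal (RingOf p V W b hb)).jacobson ↔ x.s = 0) ∧
    (∀ x : RingOf p V W b hb,
      x ∈ (⊥ : Ideal (RingOf p V W b hb)).jacobson ^ 2 ↔
        x.s = 0 ∧ x.v = 0 ∧ x.w ∈ Submodule.span (ZMod p) {w : W | ∃ u v, b u v = w}) ∧
    (⊥ : Ideal (RingOf p V W b hb)).jacobson ^ 2 ≠ ⊥ ∧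
    (⊥ : Ideal (RingOf p V W b hb)).jacobson ^ 3 = ⊥ ∧
    (⊥ : Ideal (RingOf p V W b hb)).jacobson ^ 2 < (⊥ : Ideal (RingOf p V W b hb)).jacobson :=
  statement17_general p hp b hb hnt
end

section
/- For each prime p there is a constant C > 0 such that for all sufficiently large n the following holds: there exist at least p^{(2/27)n³ − C n²} pairwise nonisomorphic commutative associative unital local rings R of cardinality p^n satisfying J(R) ≠ J(R)² and J(R)² ≠ 0 (i.e. J(R) ⊋ J(R)² ⊋ 0). -/
/-!
A symmetric bilinear map `β : V × V → W` over a field `k` makes `k ⊕ V ⊕ W` a local ring, with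
`(c, v, w) (c', v', w') = (c c', c v' + c' v, c w' + c' w + β v v')`. Its maximal ideal is
`V ⊕ W`, whose square lies in `W` and contains `β(V, V)`; so `J ≠ J²` as soon as `V ≠ 0`, and
`J² ≠ 0` as soon as `β ≠ 0`.

Over `𝔽_p`, a ring isomorphism between two such rings is in particular an additive automorphism
of `𝔽_p ⊕ V ⊕ W ≅ 𝔽_p ^ n`, and it determines the target `β` from the source `β`. Hence each
isomorphism class contains at most `p ^ n²` of the `p ^ (b a (a + 1) / 2)` symmetric bilinear maps
`𝔽_p ^ a × 𝔽_p ^ a → 𝔽_p ^ b`. Taking `a ≈ 2n/3` and `b ≈ n/3` leaves at least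
`p ^ (2n³/27 - O(n²))` isomorphism classes.
-/

namespace Setoid

variable {α : Type*} (s : Setoid α)

lemma natCard_le_mul_natCard_quotient [Finite α] {m : ℕ} (h : ∀ a, Nat.card {b // s b a} ≤ m) :
    Nat.card α ≤ m * Nat.card (Quotient s) := by
  classical
  have := Fintype.ofFinite α
  have := Fintype.ofFinite (Quotient s)
  rw [Nat.card_eq_fintype_card, Nat.card_eq_fintype_card]
  refine (Finset.card_le_mul_card_image (f := Quotient.mk s) Finset.univ m fun q _ => ?_).trans
    (Nat.mul_le_mul_left _ (Finset.card_le_univ _))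
  induction q using Quotient.inductionOn with
  | h a => simpa [Fintype.card_subtype, Quotient.eq] using h a

lemma exists_fin_pairwise_not_rel [Finite (Quotient s)] {m : ℕ} (hm : m ≤ Nat.card (Quotient s)) :
    ∃ f : Fin m → α, ∀ i j, s (f i) (f j) → i = j := by
  have := Fintype.ofFinite (Quotient s)
  obtain ⟨e⟩ : Nonempty (Fin m ↪ Quotient s) :=
    Function.Embedding.nonempty_of_card_le (by simpa [Nat.card_eq_fintype_card] using hm)
  exact ⟨fun i => (e i).out, fun i j h => e.injective (by simpa using Quotient.sound h)⟩

end Setoid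

def ringEquivSetoid {α : Type*} (R : α → Type*) [∀ x, Mul (R x)] [∀ x, Add (R x)] :
    Setoid α where
  r x y := Nonempty (R x ≃+* R y)
  iseqv := ⟨fun _ => ⟨.refl _⟩, fun ⟨e⟩ => ⟨e.symm⟩, fun ⟨e⟩ ⟨f⟩ => ⟨e.trans f⟩⟩

section Sym2Bilin

variable {R ι κ : Type*} [CommSemiring R] [Fintype κ]

def bilinOfSym2 (d : ι → Sym2 κ → R) : (κ → R) →ₗ[R] (κ → R) →ₗ[R] (ι → R) :=
  LinearMap.mk₂ R (fun v v' i => ∑ j, ∑ l, d i s(j, l) * v j * v' l)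
    (fun _ _ _ => by ext; simp [mul_add, add_mul, Finset.sum_add_distrib])
    (fun _ _ _ => by ext; simp [Finset.mul_sum, mul_assoc, mul_left_comm])
    (fun _ _ _ => by ext; simp [mul_add, Finset.sum_add_distrib])
    (fun _ _ _ => by ext; simp [Finset.mul_sum, mul_left_comm])

lemma bilinOfSym2_apply (d : ι → Sym2 κ → R) (v v' : κ → R) (i : ι) :
    bilinOfSym2 d v v' i = ∑ j, ∑ l, d i s(j, l) * v j * v' l := rfl

lemma bilinOfSym2_comm (d : ι → Sym2 κ → R) (v v' : κ → R) :
    bilinOfSym2 d v v' = bilinOfSym2 d v' v := by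
  ext i
  rw [bilinOfSym2_apply, bilinOfSym2_apply, Finset.sum_comm]
  simp only [Sym2.eq_swap (a := _), mul_right_comm]

@[simp] lemma bilinOfSym2_zero : bilinOfSym2 (0 : ι → Sym2 κ → R) = 0 := by
  ext; simp [bilinOfSym2_apply]

instance (d : ι → Sym2 κ → R) : Fact (∀ v v', bilinOfSym2 d v v' = bilinOfSym2 d v' v) :=
  ⟨bilinOfSym2_comm d⟩

variable [DecidableEq κ]

lemma bilinOfSym2_single (d : ι → Sym2 κ → R) (j l : κ) :
    bilinOfSym2 d (Pi.single j 1) (Pi.single l 1) = fun i => d i s(j, l) := by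
  ext i
  simp [bilinOfSym2_apply, Pi.single_apply]

lemma bilinOfSym2_injective : Function.Injective (bilinOfSym2 (R := R) (ι := ι) (κ := κ)) := by
  intro d d' h
  ext i z
  induction z using Sym2.ind with
  | _ j l =>
    simpa [bilinOfSym2_single] using
      congrFun (LinearMap.congr_fun₂ h (Pi.single j 1) (Pi.single l 1)) i

end Sym2Bilin

@[ext]
structure BilinExt {k V W : Type*} [CommRing k] [AddCommGroup V] [Module k V]
    [AddCommGroup W] [Module k W] (β : V →ₗ[k] V →ₗ[k] W) where
  c : k
  v : V
  w : W

namespace BilinExt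

variable {k V W : Type*} [CommRing k] [AddCommGroup V] [Module k V] [AddCommGroup W] [Module k W]
  {β : V →ₗ[k] V →ₗ[k] W}

variable (β) in
def equivProd : BilinExt β ≃ k × V × W where
  toFun x := (x.c, x.v, x.w)
  invFun x := ⟨x.1, x.2.1, x.2.2⟩

instance : AddCommGroup (BilinExt β) := (equivProd β).addCommGroup
instance : Module k (BilinExt β) := (equivProd β).module k

@[simp] lemma add_c (x y : BilinExt β) : (x + y).c = x.c + y.c := rfl
@[simp] lemma add_v (x y : BilinExt β) : (x + y).v = x.v + y.v := rfl
@[simp] lemma add_w (x y : BilinExt β) : (x + y).w = x.w + y.w := rfl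
@[simp] lemma zero_c : (0 : BilinExt β).c = 0 := rfl
@[simp] lemma zero_v : (0 : BilinExt β).v = 0 := rfl
@[simp] lemma zero_w : (0 : BilinExt β).w = 0 := rfl
@[simp] lemma sub_c (x y : BilinExt β) : (x - y).c = x.c - y.c := rfl
@[simp] lemma smul_c (r : k) (x : BilinExt β) : (r • x).c = r * x.c := rfl
@[simp] lemma smul_v (r : k) (x : BilinExt β) : (r • x).v = r • x.v := rfl
@[simp] lemma smul_w (r : k) (x : BilinExt β) : (r • x).w = r • x.w := rfl

instance : One (BilinExt β) := ⟨⟨1, 0, 0⟩⟩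
instance : Mul (BilinExt β) :=
  ⟨fun x y => ⟨x.c * y.c, x.c • y.v + y.c • x.v, x.c • y.w + y.c • x.w + β x.v y.v⟩⟩

@[simp] lemma one_c : (1 : BilinExt β).c = 1 := rfl
@[simp] lemma one_v : (1 : BilinExt β).v = 0 := rfl
@[simp] lemma one_w : (1 : BilinExt β).w = 0 := rfl
@[simp] lemma mul_c (x y : BilinExt β) : (x * y).c = x.c * y.c := rfl
@[simp] lemma mul_v (x y : BilinExt β) : (x * y).v = x.c • y.v + y.c • x.v := rfl
@[simp] lemma mul_w (x y : BilinExt β) : (x * y).w = x.c • y.w + y.c • x.w + β x.v y.v := rfl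

instance : Ring (BilinExt β) where
  __ := (inferInstance : AddCommGroup (BilinExt β))
  left_distrib x y z := by ext <;> simp <;> first | ring | module
  right_distrib x y z := by ext <;> simp <;> first | ring | module
  zero_mul x := by ext <;> simp
  mul_zero x := by ext <;> simp
  mul_assoc x y z := by ext <;> simp [mul_assoc, mul_smul, smul_add] <;> module
  one_mul x := by ext <;> simp
  mul_one x := by ext <;> simp

instance : Algebra k (BilinExt β) :=
  Algebra.ofModule (fun r x y => by ext <;> simp [mul_smul, smul_comm r]; ring)
    (fun r x y => by ext <;> simp [mul_smul, smul_comm r]; ring)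

@[simp] lemma algebraMap_c (r : k) : (algebraMap k (BilinExt β) r).c = r := by
  simp [Algebra.algebraMap_eq_smul_one]
@[simp] lemma algebraMap_v (r : k) : (algebraMap k (BilinExt β) r).v = 0 := by
  simp [Algebra.algebraMap_eq_smul_one]
@[simp] lemma algebraMap_w (r : k) : (algebraMap k (BilinExt β) r).w = 0 := by
  simp [Algebra.algebraMap_eq_smul_one]

variable (β) in
def cAlgHom : BilinExt β →ₐ[k] k where
  toFun := c
  map_one' := rfl
  map_mul' _ _ := rfl
  map_zero' := rfl
  map_add' _ _ := rfl
  commutes' _ := by simp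

lemma pow_three_eq_zero {x : BilinExt β} (hx : x.c = 0) : x ^ 3 = 0 := by
  ext <;> simp [pow_succ, hx]

theorem isUnit_iff {x : BilinExt β} : IsUnit x ↔ IsUnit x.c := by
  refine ⟨fun h => h.map (cAlgHom β), fun h => ?_⟩
  have hnil : IsNilpotent (x - algebraMap k _ x.c) := ⟨3, pow_three_eq_zero (by simp)⟩
  simpa using hnil.isUnit_add_left_of_commute (h.map (algebraMap k (BilinExt β)))
    (Algebra.commutes _ _).symm

instance [Nontrivial k] : Nontrivial (BilinExt β) :=
  (cAlgHom β).toRingHom.domain_nontrivial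

instance [IsLocalRing k] : IsLocalRing (BilinExt β) :=
  IsLocalRing.of_isUnit_or_isUnit_one_sub_self fun x => by
    simpa [isUnit_iff] using IsLocalRing.isUnit_or_isUnit_one_sub_self x.c

instance [Fact (∀ v v', β v v' = β v' v)] : CommRing (BilinExt β) where
  mul_comm x y := by ext <;> simp [mul_comm, Fact.out (p := ∀ v v', β v v' = β v' v) x.v] <;> abel

section Field

variable {k V W : Type*} [Field k] [AddCommGroup V] [Module k V] [AddCommGroup W] [Module k W]
  {β : V →ₗ[k] V →ₗ[k] W} [Fact (∀ v v', β v v' = β v' v)]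

open IsLocalRing

lemma mem_maximalIdeal_iff {x : BilinExt β} : x ∈ maximalIdeal (BilinExt β) ↔ x.c = 0 := by
  rw [mem_maximalIdeal, mem_nonunits_iff, isUnit_iff, isUnit_iff_ne_zero, not_not]

lemma v_eq_zero_of_mem_maximalIdeal_sq {x : BilinExt β} (hx : x ∈ maximalIdeal (BilinExt β) ^ 2) :
    x.v = 0 := by
  rw [pow_two] at hx
  refine Submodule.mul_induction_on hx (fun y hy z hz => ?_) fun y z hy hz => by simp [hy, hz]
  rw [mem_maximalIdeal_iff] at hy hz
  simp [hy, hz]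

theorem maximalIdeal_sq_ne [Nontrivial V] : maximalIdeal (BilinExt β) ^ 2 ≠ maximalIdeal _ := by
  obtain ⟨v, hv⟩ := exists_ne (0 : V)
  intro h
  have hmem : (⟨0, v, 0⟩ : BilinExt β) ∈ maximalIdeal (BilinExt β) ^ 2 := by
    rw [h, mem_maximalIdeal_iff]
  exact hv (v_eq_zero_of_mem_maximalIdeal_sq hmem)

theorem maximalIdeal_sq_ne_bot (hβ : β ≠ 0) : maximalIdeal (BilinExt β) ^ 2 ≠ ⊥ := by
  obtain ⟨v, v', hvv'⟩ : ∃ v v', β v v' ≠ 0 := by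
    by_contra! h
    exact hβ (LinearMap.ext₂ h)
  intro h
  have hmem : (⟨0, v, 0⟩ * ⟨0, v', 0⟩ : BilinExt β) ∈ maximalIdeal (BilinExt β) ^ 2 :=
    pow_two (maximalIdeal (BilinExt β)) ▸ Ideal.mul_mem_mul (mem_maximalIdeal_iff.2 rfl)
      (mem_maximalIdeal_iff.2 rfl)
  rw [h, Ideal.mem_bot] at hmem
  exact hvv' (by simpa using congrArg w hmem)

end Field

variable (β : V →ₗ[k] V →ₗ[k] W) in
def linearEquivProd : BilinExt β ≃ₗ[k] k × V × W := (equivProd β).linearEquiv k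

@[simp] lemma linearEquivProd_apply {β : V →ₗ[k] V →ₗ[k] W} (x : BilinExt β) :
    linearEquivProd β x = (x.c, x.v, x.w) := rfl

theorem eq_of_ringEquiv {β₀ β₁ β₂ : V →ₗ[k] V →ₗ[k] W} (f₁ : BilinExt β₀ ≃+* BilinExt β₁)
    (f₂ : BilinExt β₀ ≃+* BilinExt β₂)
    (h : ∀ x, linearEquivProd β₁ (f₁ x) = linearEquivProd β₂ (f₂ x)) : β₁ = β₂ := by
  have hf : ∀ v, f₂ (f₁.symm ⟨0, v, 0⟩) = ⟨0, v, 0⟩ := fun v =>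
    (linearEquivProd β₂).injective (by rw [← h, RingEquiv.apply_symm_apply]; rfl)
  ext v v'
  have := congrArg (·.2.2) (h (f₁.symm ⟨0, v, 0⟩ * f₁.symm ⟨0, v', 0⟩))
  simpa [hf] using this

section Counting

variable {p : ℕ} [Fact p.Prime] {V W : Type*} [AddCommGroup V] [Module (ZMod p) V]
  [Module.Finite (ZMod p) V] [AddCommGroup W] [Module (ZMod p) W] [Module.Finite (ZMod p) W]

open Module in
theorem natCard_ringEquiv_class_le (β₀ : V →ₗ[ZMod p] V →ₗ[ZMod p] W) :
    Nat.card {β : V →ₗ[ZMod p] V →ₗ[ZMod p] W // Nonempty (BilinExt β₀ ≃+* BilinExt β)}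
      ≤ p ^ (finrank (ZMod p) (ZMod p × V × W) * finrank (ZMod p) (ZMod p × V × W)) := by
  let toEnd (β : {β : V →ₗ[ZMod p] V →ₗ[ZMod p] W // Nonempty (BilinExt β₀ ≃+* BilinExt β)}) :
      (ZMod p × V × W) →ₗ[ZMod p] (ZMod p × V × W) :=
    ((linearEquivProd β.1).toAddEquiv.toAddMonoidHom.comp
      ((Classical.choice β.2).toAddMonoidHom.comp
        (linearEquivProd β₀).symm.toAddEquiv.toAddMonoidHom)).toZModLinearMap p
  have hinj : Function.Injective toEnd := fun β₁ β₂ h => Subtype.ext <|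
    eq_of_ringEquiv _ _ fun x => LinearMap.congr_fun h (linearEquivProd β₀ x)
  have : Finite ((ZMod p × V × W) →ₗ[ZMod p] (ZMod p × V × W)) :=
    Module.finite_of_finite (ZMod p)
  calc _ ≤ Nat.card ((ZMod p × V × W) →ₗ[ZMod p] (ZMod p × V × W)) :=
        Nat.card_le_card_of_injective _ hinj
    _ = _ := by
        rw [natCard_eq_pow_finrank (K := ZMod p), finrank_linearMap (ZMod p) (ZMod p),
          Nat.card_zmod]

end Counting

end BilinExt

lemma choose_two_two_mul_add_one (m : ℕ) : (2 * m + 1).choose 2 = m * (2 * m + 1) := by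
  have : (2 * m + 1) * (2 * m + 1 - 1) = 2 * (m * (2 * m + 1)) := by
    rw [Nat.add_sub_cancel]; ring
  rw [Nat.choose_two_right, this, Nat.mul_div_cancel_left _ two_pos]

lemma two_mul_cube_div_sub_add_sq_lt {n : ℕ} (hn : 21 ≤ n) :
    2 * n ^ 3 / 27 - 2 * n ^ 2 + n ^ 2 < (n - 1 - 2 * (n / 3)) * (2 * (n / 3) + 1).choose 2 := by
  set m := n / 3
  set b := n - 1 - 2 * m
  rw [choose_two_two_mul_add_one]
  have hm : 7 * m ^ 2 ≤ m ^ 3 := by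
    rw [pow_succ _ 2, mul_comm]; exact Nat.mul_le_mul_left _ (by omega)
  have hb : m ≤ b + 1 := by omega
  have hn3 : 3 * m ≤ n ∧ n ≤ 3 * m + 2 := by omega
  have h27 : 27 * (2 * n ^ 3 / 27) ≤ 2 * n ^ 3 := Nat.mul_div_le _ _
  have hE : m * (m * (2 * m + 1)) ≤ (b + 1) * (m * (2 * m + 1)) := Nat.mul_le_mul_right _ hb
  have hcube : n ^ 3 ≤ (3 * m + 2) ^ 3 := Nat.pow_le_pow_left hn3.2 3
  have hsq : (3 * m) ^ 2 ≤ n ^ 2 := Nat.pow_le_pow_left hn3.1 2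
  have hsq' : n ^ 2 ≤ (3 * m + 2) ^ 2 := Nat.pow_le_pow_left hn3.2 2
  have h1 : n ^ 2 < b * (m * (2 * m + 1)) := by nlinarith
  have h2 : 2 * n ^ 3 / 27 < b * (m * (2 * m + 1)) + n ^ 2 := by nlinarith
  omega

section Assembly

variable {p : ℕ} [Fact p.Prime] {a b : ℕ}

open BilinExt

lemma natCard_bilinExt
    (β : (Fin a → ZMod p) →ₗ[ZMod p] (Fin a → ZMod p) →ₗ[ZMod p] (Fin b → ZMod p)) :
    Nat.card (BilinExt β) = p ^ (1 + a + b) := by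
  simp [Nat.card_congr (equivProd β), pow_add, mul_assoc]

lemma natCard_nonzero_sym2Coeffs :
    Nat.card {d : Fin b → Sym2 (Fin a) → ZMod p // d ≠ 0} = p ^ (b * (a + 1).choose 2) - 1 := by
  classical
  rw [Nat.card_eq_fintype_card, Fintype.card_subtype_compl, Fintype.card_subtype_eq,
    Fintype.card_fun, Fintype.card_fun, ZMod.card, Sym2.card, Fintype.card_fin, Fintype.card_fin,
    ← pow_mul, mul_comm]

lemma pow_le_natCard_quotient_ringEquivSetoid {M : ℕ}
    (hM : M + (1 + a + b) ^ 2 < b * (a + 1).choose 2) :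
    p ^ M ≤ Nat.card (Quotient (ringEquivSetoid
      fun d : {d : Fin b → Sym2 (Fin a) → ZMod p // d ≠ 0} => BilinExt (bilinOfSym2 d.1))) := by
  set s := ringEquivSetoid fun d : {d : Fin b → Sym2 (Fin a) → ZMod p // d ≠ 0} =>
    BilinExt (bilinOfSym2 d.1)
  have : Finite ((Fin a → ZMod p) →ₗ[ZMod p] (Fin a → ZMod p) →ₗ[ZMod p] (Fin b → ZMod p)) :=
    Module.finite_of_finite (ZMod p)
  have hfiber (d) : Nat.card {d' // s d' d} ≤ p ^ (1 + a + b) ^ 2 := by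
    calc Nat.card {d' // s d' d}
        ≤ Nat.card {β // Nonempty (BilinExt (bilinOfSym2 d.1) ≃+* BilinExt β)} :=
          Nat.card_le_card_of_injective
            (fun d' => ⟨bilinOfSym2 d'.1.1, ⟨(Classical.choice d'.2).symm⟩⟩)
            fun _ _ h => Subtype.ext <| Subtype.ext <| bilinOfSym2_injective congr($h.1)
      _ ≤ p ^ (1 + a + b) ^ 2 := by
          simpa [Module.finrank_prod, sq, add_assoc] using
            natCard_ringEquiv_class_le (bilinOfSym2 d.1)
  have hcount := s.natCard_le_mul_natCard_quotient hfiber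
  rw [natCard_nonzero_sym2Coeffs] at hcount
  have hlt : p ^ (M + (1 + a + b) ^ 2) < p ^ (b * (a + 1).choose 2) :=
    Nat.pow_lt_pow_right (Fact.out : p.Prime).one_lt hM
  rw [pow_add, mul_comm] at hlt
  refine Nat.le_of_mul_le_mul_left (c := p ^ (1 + a + b) ^ 2) ?_
    (pow_pos (Fact.out : p.Prime).pos _)
  omega

theorem exists_pairwise_nonisomorphic_bilinExt (ha : 0 < a) {M : ℕ}
    (hM : M + (1 + a + b) ^ 2 < b * (a + 1).choose 2) :
    ∃ Rs : Fin (p ^ M) → CommRingCat.{0},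
      (∀ i, Nat.card (Rs i) = p ^ (1 + a + b)) ∧
      (∀ i, IsLocalRing (Rs i)) ∧
      (∀ i, (⊥ : Ideal (Rs i)).jacobson ^ 2 ≠ (⊥ : Ideal (Rs i)).jacobson) ∧
      (∀ i, (⊥ : Ideal (Rs i)).jacobson ^ 2 ≠ ⊥) ∧
      (∀ i j, i ≠ j → ¬ Nonempty ((Rs i) ≃+* (Rs j))) := by
  obtain ⟨d, hd⟩ :=
    Setoid.exists_fin_pairwise_not_rel _ (pow_le_natCard_quotient_ringEquivSetoid (p := p) hM)
  have : NeZero a := ⟨ha.ne'⟩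
  refine ⟨fun i => CommRingCat.of (BilinExt (bilinOfSym2 (d i).1)), fun i => natCard_bilinExt _,
    fun i => inferInstanceAs (IsLocalRing (BilinExt _)), fun i => ?_, fun i => ?_,
    fun i j hij e => hij (hd i j e)⟩
  · rw [IsLocalRing.jacobson_eq_maximalIdeal ⊥ bot_ne_top]
    exact maximalIdeal_sq_ne
  · rw [IsLocalRing.jacobson_eq_maximalIdeal ⊥ bot_ne_top]
    exact maximalIdeal_sq_ne_bot ((bilinOfSym2_injective.ne_iff' bilinOfSym2_zero).2 (d i).2)

end Assembly

/-- For every prime `p` there is `C > 0` such that for all large `n` there are at least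
`p^(2n³/27 − Cn²)` pairwise nonisomorphic commutative local rings of order `p^n` with
`J(R) ⊋ J(R)² ⊋ 0`. -/
theorem statement18 (p : ℕ) (hp : p.Prime) :
    ∃ C : ℕ, 0 < C ∧ ∃ N : ℕ, ∀ n : ℕ, N ≤ n →
      ∃ Rs : Fin (p ^ (2 * n ^ 3 / 27 - C * n ^ 2)) → CommRingCat.{0},
        (∀ i, Nat.card (Rs i) = p ^ n) ∧
        (∀ i, IsLocalRing (Rs i)) ∧
        (∀ i, (⊥ : Ideal (Rs i)).jacobson ^ 2 ≠ (⊥ : Ideal (Rs i)).jacobson) ∧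
        (∀ i, (⊥ : Ideal (Rs i)).jacobson ^ 2 ≠ ⊥) ∧
        (∀ i j, i ≠ j → ¬ Nonempty ((Rs i) ≃+* (Rs j))) := by
  have : Fact p.Prime := ⟨hp⟩
  refine ⟨2, two_pos, 21, fun n hn => ?_⟩
  have hdim : 1 + 2 * (n / 3) + (n - 1 - 2 * (n / 3)) = n := by omega
  have := exists_pairwise_nonisomorphic_bilinExt (p := p) (by omega : 0 < 2 * (n / 3))
    (M := 2 * n ^ 3 / 27 - 2 * n ^ 2) (by rw [hdim]; exact two_mul_cube_div_sub_add_sq_lt hn)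
  rwa [hdim] at this
end

section
/- Let G be a group with lower central series γ₁ = G, γ₂ = [G,G], γ₃ = [γ₂, G]. Let V = G/γ₂ and W = γ₂/γ₃ (abelian groups, written additively), and let b : V × V → W be the ℤ-bilinear alternating map induced by the group commutator. Let A = Adj(b) = {(X,Y) ∈ End(V) × End(V) : b(Xu, v) = b(u, Yv) for all u, v ∈ V}, a subring of End(V) × End(V)^op, and let J be the Jacobson radical of A. For i ∈ ℕ let V·J^i denote the additive subgroup of V generated by {Xu : u ∈ V, (X,Y) ∈ J^i}, and let H be the preimage of V·J^i under the quotient map G → G/γ₂. Then: (a) H is a characteristic subgroup of G, i.e. α(H) = H for every automorphism α of G; and (b) if J^{2i} = 0 then [H, H] ≤ γ₃. -/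
/-- Powers of an ideal of a (possibly noncommutative) ring, as additive subgroups:
`J^0 = A` and `J^{i+1} = J^i·J`. -/
def idealPow {A : Type*} [Ring A] (J : Ideal A) : ℕ → AddSubgroup A
  | 0 => ⊤
  | n + 1 => AddSubgroup.closure {z | ∃ x ∈ idealPow J n, ∃ y ∈ J, z = x * y}

variable {G : Type*} [Group G]

/-- `γ₃ = [γ₂, G]`. -/
def gammaThree (G : Type*) [Group G] : Subgroup G := ⁅commutator G, ⊤⁆

instance : (gammaThree G).Normal := by
  unfold gammaThree; infer_instance

instance : ((gammaThree G).subgroupOf (commutator G)).Normal :=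
  Subgroup.Normal.subgroupOf inferInstance _

open scoped commutatorElement in
/-- `γ₂/γ₃` is an abelian group. -/
instance : CommGroup (↥(commutator G) ⧸ (gammaThree G).subgroupOf (commutator G)) :=
  { (inferInstance : Group _) with
    mul_comm := fun a b =>
      QuotientGroup.induction_on a fun x =>
        QuotientGroup.induction_on b fun y => by
          rw [← QuotientGroup.mk_mul, ← QuotientGroup.mk_mul, QuotientGroup.eq,
            Subgroup.mem_subgroupOf]
          have key : (((x * y)⁻¹ * (y * x) : ↥(commutator G)) : G) =
              ⁅((y : G))⁻¹, ((x : G))⁻¹⁆ := by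
            simp [commutatorElement_def, mul_inv_rev, mul_assoc]
          rw [key]
          exact Subgroup.commutator_mem_commutator (inv_mem y.2) (Subgroup.mem_top _) }

/-- `V = G/γ₂`, written additively. -/
abbrev VAb (G : Type*) [Group G] := Additive (Abelianization G)

/-- `W = γ₂/γ₃`, written additively. -/
abbrev WAb (G : Type*) [Group G] :=
  Additive (↥(commutator G) ⧸ (gammaThree G).subgroupOf (commutator G))

/-- The commutator `[x,y] = x⁻¹y⁻¹xy` lies in `γ₂`. -/
lemma pcomm_mem_commutator (x y : G) : x⁻¹ * y⁻¹ * x * y ∈ commutator G := by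
  have h := Subgroup.commutator_mem_commutator (Subgroup.mem_top x⁻¹) (Subgroup.mem_top y⁻¹)
  rw [commutator_def]
  simpa [commutatorElement_def, mul_assoc] using h

/-- `b` is induced by the group commutator. -/
def InducedByCommutator (b : VAb G →+ VAb G →+ WAb G) : Prop :=
  ∀ x y : G,
    b (Additive.ofMul (Abelianization.of x)) (Additive.ofMul (Abelianization.of y)) =
      Additive.ofMul
        (QuotientGroup.mk (⟨x⁻¹ * y⁻¹ * x * y, pcomm_mem_commutator x y⟩ : ↥(commutator G)))

/-- `V·J^i`: the additive subgroup of `V` generated by `{Xu : u ∈ V, (X,Y) ∈ J^i}`,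
where `J` is the Jacobson radical of the adjoint ring of `b`. -/
def VJ (b : VAb G →+ VAb G →+ WAb G) (i : ℕ) : AddSubgroup (VAb G) :=
  AddSubgroup.closure
    {w | ∃ P : ↥(AdjointRing b),
      P ∈ idealPow (⊥ : Ideal ↥(AdjointRing b)).jacobson i ∧ ∃ u, w = P.val.1 u}

/-- `H`: the preimage of `V·J^i` in `G`. -/
def Hsub (b : VAb G →+ VAb G →+ WAb G) (i : ℕ) : Subgroup G :=
  Subgroup.comap (Abelianization.of : G →* Abelianization G)
    (AddSubgroup.toSubgroup' (VJ b i))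

theorem isUnit_one_add_mul_comm {R : Type*} [Ring R] {a b : R} :
    IsUnit (1 + a * b) ↔ IsUnit (1 + b * a) := by
  -- Jacobson's lemma, read off from the spectrum over `ℤ` at `r = 1`
  simpa [spectrum.mem_iff, sub_eq_add_neg, not_iff_not] using
    spectrum.unit_mem_mul_comm (R := ℤ) (a := -a) (b := b) (r := 1)

namespace Ideal

variable {R S : Type*} [Ring R] [Ring S]

theorem mem_jacobson_bot_iff_forall_isUnit_one_add_mul_left {x : R} :
    x ∈ (⊥ : Ideal R).jacobson ↔ ∀ y, IsUnit (1 + y * x) := by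
  have left_inv : x ∈ (⊥ : Ideal R).jacobson ↔ ∀ y, ∃ z, z * (1 + y * x) = 1 := by
    simp only [mem_jacobson_iff, mem_bot, sub_eq_zero, mul_add, mul_one,
      mul_assoc, add_comm]
  rw [left_inv]
  refine ⟨fun h y => ?_, fun h y => ⟨(h y).unit⁻¹.val, (h y).val_inv_mul⟩⟩
  obtain ⟨z, hz⟩ := h y
  -- `z = 1 + (-(z * y)) * x` is itself left invertible, hence a unit
  obtain ⟨w, hw⟩ := h (-(z * y))
  have hz' : 1 + -(z * y) * x = z := by
    rw [← hz]; noncomm_ring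
  rw [hz'] at hw
  have hw' : w = 1 + y * x := by
    calc w = w * (z * (1 + y * x)) := by rw [hz, mul_one]
      _ = 1 + y * x := by rw [← mul_assoc, hw, one_mul]
  exact isUnit_iff_exists.mpr ⟨z, by rw [← hw', hw], hz⟩

theorem mem_jacobson_bot_iff_forall_isUnit_one_add_mul_right {x : R} :
    x ∈ (⊥ : Ideal R).jacobson ↔ ∀ y, IsUnit (1 + x * y) := by
  simp only [mem_jacobson_bot_iff_forall_isUnit_one_add_mul_left, isUnit_one_add_mul_comm]

theorem map_mem_jacobson_bot {f : R →+* S} (hf : Function.Surjective f) {x : R}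
    (hx : x ∈ (⊥ : Ideal R).jacobson) : f x ∈ (⊥ : Ideal S).jacobson := by
  rw [mem_jacobson_bot_iff_forall_isUnit_one_add_mul_left] at hx ⊢
  intro y
  obtain ⟨y, rfl⟩ := hf y
  simpa using (hx y).map f

theorem unop_map_mem_jacobson_bot {f : R →+* Sᵐᵒᵖ} (hf : Function.Surjective f) {x : R}
    (hx : x ∈ (⊥ : Ideal R).jacobson) : (f x).unop ∈ (⊥ : Ideal S).jacobson := by
  rw [mem_jacobson_bot_iff_forall_isUnit_one_add_mul_left] at hx
  rw [mem_jacobson_bot_iff_forall_isUnit_one_add_mul_right]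
  intro y
  obtain ⟨y', hy'⟩ := hf (MulOpposite.op y)
  rw [← MulOpposite.unop_op y, ← hy']
  simpa using ((hx y').map f).unop

instance : (⊥ : Ideal R).jacobson.IsTwoSided := jacobson_bot (R := R) ▸ inferInstance

end Ideal

section IdealPow

variable {R S : Type*} [Ring R] [Ring S] {J : Ideal R} {m n : ℕ} {x y : R}

theorem idealPow_succ_le {K : AddSubgroup R} (h : ∀ x ∈ idealPow J n, ∀ y ∈ J, x * y ∈ K) :
    idealPow J (n + 1) ≤ K :=
  (AddSubgroup.closure_le K).mpr fun _ ⟨x, hx, y, hy, hxy⟩ => hxy ▸ h x hx y hy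

theorem mul_mem_idealPow_succ (hx : x ∈ idealPow J n) (hy : y ∈ J) :
    x * y ∈ idealPow J (n + 1) :=
  AddSubgroup.subset_closure ⟨x, hx, y, hy, rfl⟩

theorem mem_idealPow_one (hy : y ∈ J) : y ∈ idealPow J 1 := by
  simpa using mul_mem_idealPow_succ (J := J) (n := 0) (x := 1) (AddSubgroup.mem_top _) hy

theorem mul_mem_idealPow_right [J.IsTwoSided] (hx : x ∈ idealPow J n) (y : R) :
    x * y ∈ idealPow J n := by
  cases n with
  | zero => exact AddSubgroup.mem_top _
  | succ n =>
    refine idealPow_succ_le (K := (idealPow J (n + 1)).comap (AddMonoidHom.mulRight y))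
      (fun z hz w hw => ?_) hx
    simpa [mul_assoc] using mul_mem_idealPow_succ hz (J.mul_mem_right y hw)

theorem mul_mem_idealPow [J.IsTwoSided] (hx : x ∈ idealPow J m) (hy : y ∈ idealPow J n) :
    x * y ∈ idealPow J (m + n) := by
  induction n generalizing y with
  | zero => exact mul_mem_idealPow_right hx y
  | succ n ih =>
    refine idealPow_succ_le (K := (idealPow J (m + (n + 1))).comap (AddMonoidHom.mulLeft x))
      (fun z hz w hw => ?_) hy
    simpa [mul_assoc, ← add_assoc] using mul_mem_idealPow_succ (ih hz) hw

theorem map_mem_idealPow {f : R →+* S} {K : Ideal S} (hJK : ∀ x ∈ J, f x ∈ K)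
    (hx : x ∈ idealPow J n) : f x ∈ idealPow K n := by
  induction n generalizing x with
  | zero => exact AddSubgroup.mem_top _
  | succ n ih =>
    refine idealPow_succ_le (K := (idealPow K (n + 1)).comap f.toAddMonoidHom)
      (fun z hz w hw => ?_) hx
    simpa using mul_mem_idealPow_succ (ih hz) (hJK w hw)

theorem unop_map_mem_idealPow {f : R →+* Sᵐᵒᵖ} {K : Ideal S} [K.IsTwoSided]
    (hJK : ∀ x ∈ J, (f x).unop ∈ K) (hx : x ∈ idealPow J n) : (f x).unop ∈ idealPow K n := by
  induction n generalizing x with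
  | zero => exact AddSubgroup.mem_top _
  | succ n ih =>
    refine idealPow_succ_le
      (K := (idealPow K (n + 1)).comap ((MulOpposite.opAddEquiv.symm.toAddMonoidHom).comp
        f.toAddMonoidHom)) (fun z hz w hw => ?_) hx
    simpa [add_comm 1 n] using mul_mem_idealPow (mem_idealPow_one (hJK w hw)) (ih hz)

end IdealPow

namespace AdjointRing

variable {V W : Type*} [AddCommGroup V] [AddCommGroup W] {b : V →+ V →+ W}

@[ext]
theorem ext {P Q : AdjointRing b} (h₁ : ∀ u, P.1.1 u = Q.1.1 u)
    (h₂ : ∀ v, P.1.2.unop v = Q.1.2.unop v) : P = Q :=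
  Subtype.ext <| Prod.ext (AddMonoidHom.ext h₁) (MulOpposite.unop_injective (AddMonoidHom.ext h₂))

theorem apply_fst (P : AdjointRing b) (u v : V) : b (P.1.1 u) v = b u (P.1.2.unop v) := P.2 u v

def swap (hb : ∀ u v, b u v = -b v u) : AdjointRing b →+* (AdjointRing b)ᵐᵒᵖ where
  toFun P := MulOpposite.op ⟨(P.1.2.unop, MulOpposite.op P.1.1), fun u v => by
    change b (P.1.2.unop u) v = b u (P.1.1 v)
    rw [hb, ← apply_fst, hb, neg_neg]⟩
  map_one' := rfl
  map_mul' _ _ := rfl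
  map_zero' := rfl
  map_add' _ _ := rfl

theorem swap_surjective (hb : ∀ u v, b u v = -b v u) : Function.Surjective (swap hb) :=
  fun Q => ⟨(swap hb Q.unop).unop, rfl⟩

def conj (φ : V ≃+ V) {ψ : W → W} (h : ∀ u v, b (φ u) (φ v) = ψ (b u v)) :
    AdjointRing b →+* AdjointRing b where
  toFun P := ⟨(φ.toAddMonoidHom.comp (P.1.1.comp φ.symm.toAddMonoidHom),
      MulOpposite.op (φ.toAddMonoidHom.comp (P.1.2.unop.comp φ.symm.toAddMonoidHom))),
    fun u v => by
      have := congrArg ψ (apply_fst P (φ.symm u) (φ.symm v))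
      rwa [← h, ← h, φ.apply_symm_apply, φ.apply_symm_apply] at this⟩
  map_one' := ext φ.apply_symm_apply φ.apply_symm_apply
  map_mul' P Q := ext (fun _ => congrArg (fun w => φ (P.1.1 w)) (φ.symm_apply_apply _).symm)
    (fun _ => congrArg (fun w => φ (Q.1.2.unop w)) (φ.symm_apply_apply _).symm)
  map_zero' := ext (fun _ => map_zero φ) (fun _ => map_zero φ)
  map_add' _ _ := ext (fun _ => map_add φ _ _) (fun _ => map_add φ _ _)

theorem conj_apply_fst (φ : V ≃+ V) {ψ : W → W} (h : ∀ u v, b (φ u) (φ v) = ψ (b u v))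
    (P : AdjointRing b) (u : V) : (conj φ h P).1.1 (φ u) = φ (P.1.1 u) :=
  congrArg (fun w => φ (P.1.1 w)) (φ.symm_apply_apply u)

theorem conj_surjective (φ : V ≃+ V) {ψ ψ' : W → W} (h : ∀ u v, b (φ u) (φ v) = ψ (b u v))
    (h' : ∀ u v, b (φ.symm u) (φ.symm v) = ψ' (b u v)) : Function.Surjective (conj φ h) :=
  fun P => ⟨conj φ.symm h' P, ext (fun _ => (φ.apply_symm_apply _).trans
      (congrArg P.1.1 (φ.apply_symm_apply _)))
    (fun _ => (φ.apply_symm_apply _).trans (congrArg P.1.2.unop (φ.apply_symm_apply _)))⟩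

theorem apply_eq_zero_of_mem_idealPow (hb : ∀ u v, b u v = -b v u) {m n : ℕ}
    (hJ : idealPow (⊥ : Ideal (AdjointRing b)).jacobson (n + m) = ⊥) {P Q : AdjointRing b}
    (hP : P ∈ idealPow (⊥ : Ideal (AdjointRing b)).jacobson m)
    (hQ : Q ∈ idealPow (⊥ : Ideal (AdjointRing b)).jacobson n) (u v : V) :
    b (P.1.1 u) (Q.1.1 v) = 0 := by
  have hQ' : (swap hb Q).unop ∈ idealPow (⊥ : Ideal (AdjointRing b)).jacobson n :=
    unop_map_mem_idealPow (fun _ => Ideal.unop_map_mem_jacobson_bot (swap_surjective hb)) hQ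
  have hzero : (swap hb Q).unop * P = 0 := by
    simpa [hJ] using mul_mem_idealPow hQ' hP
  -- the second component of `swap Q * P` is `P.Y ∘ Q.X`
  have hYX : P.1.2.unop (Q.1.1 v) = 0 := congrArg (fun R : AdjointRing b => R.1.2.unop v) hzero
  rw [apply_fst, hYX, map_zero]

end AdjointRing

theorem AddMonoidHom.apply_eq_zero_of_mem_closure {M N P : Type*} [AddCommGroup M]
    [AddCommGroup N] [AddCommGroup P] (f : M →+ N →+ P) {s : Set M} {t : Set N}
    (h : ∀ x ∈ s, ∀ y ∈ t, f x y = 0) {x : M} {y : N} (hx : x ∈ AddSubgroup.closure s)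
    (hy : y ∈ AddSubgroup.closure t) : f x y = 0 := by
  have hs : ∀ y ∈ t, AddSubgroup.closure s ≤ (f.flip y).ker := fun y hy =>
    (AddSubgroup.closure_le _).mpr fun x hx => h x hx y hy
  exact ((AddSubgroup.closure_le (f x).ker).mpr fun y hy' => hs y hy' hx) hy

section LowerCentral

variable {H : Type*} [Group H]

theorem map_commutator_le (f : G →* H) : (commutator G).map f ≤ commutator H := by
  rw [commutator_def, commutator_def, Subgroup.map_commutator]
  exact Subgroup.commutator_mono le_top le_top

theorem map_gammaThree_le (f : G →* H) : (gammaThree G).map f ≤ gammaThree H := by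
  rw [gammaThree, gammaThree, Subgroup.map_commutator]
  exact Subgroup.commutator_mono (map_commutator_le f) le_top

def gammaQuotientMap (f : G →* H) :
    ↥(commutator G) ⧸ (gammaThree G).subgroupOf (commutator G) →*
      ↥(commutator H) ⧸ (gammaThree H).subgroupOf (commutator H) :=
  QuotientGroup.map _ _
    ((f.comp (commutator G).subtype).codRestrict (commutator H)
      fun x => map_commutator_le f ⟨x, x.2, rfl⟩)
    fun x hx => map_gammaThree_le f ⟨x, hx, rfl⟩

end LowerCentral

theorem VAb.exists_ofMul_of (u : VAb G) : ∃ x : G, Additive.ofMul (Abelianization.of x) = u :=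
  QuotientGroup.mk_surjective u

namespace InducedByCommutator

variable {b : VAb G →+ VAb G →+ WAb G} (hb : InducedByCommutator b)
include hb

theorem skew (u v : VAb G) : b u v = -b v u := by
  obtain ⟨x, rfl⟩ := VAb.exists_ofMul_of u
  obtain ⟨y, rfl⟩ := VAb.exists_ofMul_of v
  rw [hb, hb, ← ofMul_inv, ← QuotientGroup.mk_inv]
  exact congrArg _ (congrArg _ (Subtype.ext (by simp [mul_assoc])))

theorem apply_eq_zero_iff (x y : G) :
    b (Additive.ofMul (Abelianization.of x)) (Additive.ofMul (Abelianization.of y)) = 0 ↔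
      x⁻¹ * y⁻¹ * x * y ∈ gammaThree G := by
  rw [hb, ofMul_eq_zero, QuotientGroup.eq_one_iff, Subgroup.mem_subgroupOf]

theorem map_apply_map {H : Type*} [Group H] {b' : VAb H →+ VAb H →+ WAb H}
    (hb' : InducedByCommutator b') (f : G →* H) (u v : VAb G) :
    b' ((Abelianization.map f).toAdditive u) ((Abelianization.map f).toAdditive v) =
      (gammaQuotientMap f).toAdditive (b u v) := by
  obtain ⟨x, rfl⟩ := VAb.exists_ofMul_of u
  obtain ⟨y, rfl⟩ := VAb.exists_ofMul_of v
  refine (hb' (f x) (f y)).trans ((congrArg Additive.ofMul ?_).trans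
    (congrArg (gammaQuotientMap f).toAdditive (hb x y)).symm)
  exact congrArg _ (Subtype.ext (by simp))

end InducedByCommutator

variable {b : VAb G →+ VAb G →+ WAb G}

theorem map_mem_VJ (φ : VAb G ≃+ VAb G) {ψ ψ' : WAb G → WAb G}
    (h : ∀ u v, b (φ u) (φ v) = ψ (b u v)) (h' : ∀ u v, b (φ.symm u) (φ.symm v) = ψ' (b u v))
    {i : ℕ} {w : VAb G} (hw : w ∈ VJ b i) : φ w ∈ VJ b i := by
  refine ((AddSubgroup.closure_le ((VJ b i).comap φ.toAddMonoidHom)).mpr ?_) hw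
  rintro _ ⟨P, hP, u, rfl⟩
  have hconj := map_mem_idealPow
    (fun _ => Ideal.map_mem_jacobson_bot (AdjointRing.conj_surjective φ h h')) hP
  exact AddSubgroup.subset_closure
    ⟨_, hconj, φ u, (AdjointRing.conj_apply_fst φ h P u).symm⟩

theorem apply_eq_zero_of_mem_VJ (hb : InducedByCommutator b) {i : ℕ}
    (hJ : idealPow (⊥ : Ideal ↥(AdjointRing b)).jacobson (i + i) = ⊥) {w w' : VAb G}
    (hw : w ∈ VJ b i) (hw' : w' ∈ VJ b i) : b w w' = 0 := by
  refine b.apply_eq_zero_of_mem_closure ?_ hw hw'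
  rintro _ ⟨P, hP, u, rfl⟩ _ ⟨Q, hQ, v, rfl⟩
  exact AdjointRing.apply_eq_zero_of_mem_idealPow hb.skew hJ hP hQ u v

theorem Hsub_characteristic (hb : InducedByCommutator b) (i : ℕ) : (Hsub b i).Characteristic := by
  refine Subgroup.characteristic_iff_map_le.mpr fun α => ?_
  rintro _ ⟨g, hg, rfl⟩
  exact map_mem_VJ α.abelianizationCongr.toAdditive (hb.map_apply_map hb α.toMonoidHom)
    (hb.map_apply_map hb α.symm.toMonoidHom) hg

theorem commutator_Hsub_le_gammaThree (hb : InducedByCommutator b) {i : ℕ}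
    (hJ : idealPow (⊥ : Ideal ↥(AdjointRing b)).jacobson (2 * i) = ⊥) :
    ⁅Hsub b i, Hsub b i⁆ ≤ gammaThree G := by
  rw [Subgroup.commutator_le]
  intro g hg h hh
  have hgh := (hb.apply_eq_zero_iff g⁻¹ h⁻¹).mp (apply_eq_zero_of_mem_VJ hb (two_mul i ▸ hJ)
    ((Hsub b i).inv_mem hg) ((Hsub b i).inv_mem hh))
  simpa [commutatorElement_def] using hgh

/-- (a) `H` is characteristic in `G`; (b) if `J^{2i} = 0` then `[H,H] ≤ γ₃`. -/
theorem statement19 (i : ℕ) (b : VAb G →+ VAb G →+ WAb G)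
    (hb : InducedByCommutator b) :
    (∀ α : G ≃* G, (Hsub b i).map α.toMonoidHom = Hsub b i) ∧
    (idealPow (⊥ : Ideal ↥(AdjointRing b)).jacobson (2 * i) = ⊥ →
      ⁅Hsub b i, Hsub b i⁆ ≤ gammaThree G) :=
  ⟨Subgroup.characteristic_iff_map_eq.mp (Hsub_characteristic hb i),
    commutator_Hsub_le_gammaThree hb⟩
end
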